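/- arXiv:1909.08276 — 5 statements merged into one kernel-verified Lean document; each statement's English description precedes it below -/
import Mathlib

section
/- Assume B : (0,∞) → [0,∞) is continuous and bounded on some neighborhood of 0. Then for every locally bounded f : (0,∞) → ℝ there exists a unique locally bounded function φ : [0,∞) × (0,∞) → ℝ such that for all t ≥ 0 and x > 0, φ(t,x) = f(x e^t) exp(−∫₀^t B(x e^s) ds) + 2 ∫₀^t B(x e^τ) exp(−∫₀^τ B(x e^s) ds) φ(t−τ, x e^τ/2) dτ. -/
open MeasureTheory Real Set Filter Topology

noncomputable section

/-- A function on `(0,∞)` is locally bounded if it is bounded on the intersection of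
`(0,∞)` with every bounded set. -/
def LocBddOn (f : ℝ → ℝ) : Prop :=
  ∀ r > 0, ∃ C, ∀ x, 0 < x → x ≤ r → |f x| ≤ C

/-- A function on `[0,∞) × (0,∞)` is locally bounded if it is bounded on the intersection of
`[0,∞) × (0,∞)` with every bounded set. -/
def LocBdd2 (φ : ℝ → ℝ → ℝ) : Prop :=
  ∀ r > 0, ∃ C, ∀ t x, 0 ≤ t → t ≤ r → 0 < x → x ≤ r → |φ t x| ≤ C

/-- Mild solution of the dual mitosis equation with initial datum `f`. -/
def IsMildSol (B f : ℝ → ℝ) (φ : ℝ → ℝ → ℝ) : Prop :=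
  ∀ t ≥ 0, ∀ x > 0,
    φ t x = f (x * exp t) * Real.exp (-∫ s in (0:ℝ)..t, B (x * exp s))
      + 2 * ∫ τ in (0:ℝ)..t,
          B (x * exp τ) * Real.exp (-∫ s in (0:ℝ)..τ, B (x * exp s)) * φ (t - τ) (x * exp τ / 2)

/-- `B : (0,∞) → [0,∞)` is continuous and bounded on some neighborhood of `0`. -/
def Bhyp (B : ℝ → ℝ) : Prop :=
  ContinuousOn B (Ioi 0) ∧ (∀ x > 0, 0 ≤ B x) ∧
    ∃ ε > 0, ∃ C, ∀ x, 0 < x → x < ε → B x ≤ C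

/-!
Along characteristics, `u t y := φ t (y e^{-t})` turns the mild formulation into the Volterra
equation `u = source + gainOp u`, in which `gainOp` integrates `u` at the halved size `y / 2`
against a kernel bounded by `2 M`, where `M` bounds `B` on `(0, y]`. The Picard iterates are then
bounded by `C (2 M t)^n / n!`, so the Neumann series converges and solves the equation. For
uniqueness, the difference `w j` of two solutions at the sizes `y / 2^j` satisfies
`|w j| ≤ 2 M ∫ |w (j + 1)|`, which iterates to `|w 0| ≤ S (2 M t)^n / n! → 0`. A mild solution is
not assumed measurable: measurability in `t` follows from the equation itself, because an interval
integral is a.e.-measurable in its upper limit whatever the integrand.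
-/

namespace DualMitosis

theorem aemeasurable_primitive (g : ℝ → ℝ) (T : ℝ) :
    AEMeasurable (fun s => ∫ τ in (0:ℝ)..s, g τ) (volume.restrict (Ioc 0 T)) := by
  set A : Set ℝ := {s | 0 ≤ s ∧ IntervalIntegrable g volume 0 s}
  have hA : A.OrdConnected := ⟨fun a ha b hb z hz => ⟨ha.1.trans hz.1, hb.2.mono_set <| by
    rw [uIcc_of_le (ha.1.trans hz.1), uIcc_of_le hb.1]
    exact Icc_subset_Icc_right hz.2⟩⟩
  have hcont : ∀ b ∈ A, ContinuousOn (fun s => ∫ τ in (0:ℝ)..s, g τ) (Icc 0 b) := fun b hb => by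
    simpa [uIcc_of_le hb.1] using
      intervalIntegral.continuousOn_primitive_interval' hb.2 left_mem_uIcc
  have hP : ContinuousOn (fun s => ∫ τ in (0:ℝ)..s, g τ) A := by
    intro s hs
    by_cases h : ∃ b ∈ A, s < b
    · obtain ⟨b, hb, hsb⟩ := h
      refine (hcont b hb s ⟨hs.1, hsb.le⟩).mono_of_mem_nhdsWithin
        (mem_nhdsWithin.2 ⟨Iio b, isOpen_Iio, hsb, fun z hz => ⟨hz.2.1, le_of_lt hz.1⟩⟩)
    · push Not at h
      exact (hcont s hs).mono (fun z hz => ⟨hz.1, h z hz⟩) s hs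
  -- off `A` the interval integral takes its junk value `0`
  have hind : ∀ s ∈ Ioc (0:ℝ) T, A.indicator (fun s => ∫ τ in (0:ℝ)..s, g τ) s
      = ∫ τ in (0:ℝ)..s, g τ := fun s hs => by
    by_cases hsA : s ∈ A
    · rw [indicator_of_mem hsA]
    · rw [indicator_of_notMem hsA, intervalIntegral.integral_undef fun h => hsA ⟨hs.1.le, h⟩]
  exact ((aemeasurable_indicator_iff hA.measurableSet).2
    (hP.aemeasurable hA.measurableSet)).restrict.congr
    ((ae_restrict_mem measurableSet_Ioc).mono hind)

theorem mul_integral_pow_div_factorial (K S t : ℝ) (n : ℕ) :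
    K * ∫ σ in (0:ℝ)..t, S * ((K * σ) ^ n / n.factorial)
      = S * ((K * t) ^ (n + 1) / (n + 1).factorial) := by
  have h : ∀ σ : ℝ, S * ((K * σ) ^ n / n.factorial) = S * K ^ n / n.factorial * σ ^ n :=
    fun σ => by ring
  simp_rw [h]
  rw [intervalIntegral.integral_const_mul, integral_pow, Nat.factorial_succ]
  push_cast
  field_simp
  ring

theorem eq_zero_of_abs_le_mul_integral_succ {w : ℕ → ℝ → ℝ} {T S K : ℝ} (hK : 0 ≤ K)
    (hint : ∀ j, IntervalIntegrable (w j) volume 0 T) (hS : ∀ j, ∀ σ ∈ Icc 0 T, |w j σ| ≤ S)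
    (hrec : ∀ j, ∀ σ ∈ Icc 0 T, |w j σ| ≤ K * ∫ τ in (0:ℝ)..σ, |w (j + 1) τ|)
    (j : ℕ) {σ : ℝ} (hσ : σ ∈ Icc 0 T) : w j σ = 0 := by
  have hn : ∀ n j, ∀ σ ∈ Icc 0 T, |w j σ| ≤ S * ((K * σ) ^ n / n.factorial) := by
    intro n
    induction n with
    | zero => simpa using hS
    | succ n ih =>
      intro j σ hσ
      calc |w j σ| ≤ K * ∫ τ in (0:ℝ)..σ, |w (j + 1) τ| := hrec j σ hσ
        _ ≤ K * ∫ τ in (0:ℝ)..σ, S * ((K * τ) ^ n / n.factorial) := by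
          gcongr
          have hsub : uIcc 0 σ ⊆ uIcc 0 T := uIcc_subset_uIcc left_mem_uIcc (Icc_subset_uIcc hσ)
          refine intervalIntegral.integral_mono_on hσ.1 ((hint (j + 1)).abs.mono_set hsub)
            ((by fun_prop : Continuous fun τ : ℝ => S * ((K * τ) ^ n / n.factorial))
              |>.intervalIntegrable _ _) fun τ hτ => ih (j + 1) τ ⟨hτ.1, hτ.2.trans hσ.2⟩
        _ = S * ((K * σ) ^ (n + 1) / (n + 1).factorial) := mul_integral_pow_div_factorial K S σ n
  have hlim : Tendsto (fun n : ℕ => S * ((K * σ) ^ n / n.factorial)) atTop (𝓝 0) := by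
    simpa using (Real.summable_pow_div_factorial (K * σ)).tendsto_atTop_zero.const_mul S
  exact abs_nonpos_iff.1 (ge_of_tendsto' hlim fun n => hn n j σ hσ)

def hazard (B : ℝ → ℝ) (y t : ℝ) : ℝ := ∫ s in (0:ℝ)..t, B (y * exp (-s))

def source (B f : ℝ → ℝ) (t y : ℝ) : ℝ := f y * exp (-hazard B y t)

def gainOp (B : ℝ → ℝ) (u : ℝ → ℝ → ℝ) (t y : ℝ) : ℝ :=
  2 * ∫ σ in (0:ℝ)..t, B (y * exp (-σ)) * exp (hazard B y σ - hazard B y t) * u σ (y / 2)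

def IsCharSol (B f : ℝ → ℝ) (u : ℝ → ℝ → ℝ) : Prop :=
  ∀ t ≥ 0, ∀ y > 0, u t y = source B f t y + gainOp B u t y

def alongChar (ψ : ℝ → ℝ → ℝ) (t y : ℝ) : ℝ := ψ t (y * exp (-t))

def seriesSol (B f : ℝ → ℝ) (t y : ℝ) : ℝ := ∑' n : ℕ, (gainOp B)^[n] (source B f) t y

variable {B : ℝ → ℝ}

@[simp]
theorem hazard_zero (y : ℝ) : hazard B y 0 = 0 := intervalIntegral.integral_same

theorem continuous_comp_mul_exp_neg (hc : ContinuousOn B (Ioi 0)) {y : ℝ} (hy : 0 < y) :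
    Continuous fun s => B (y * exp (-s)) :=
  hc.comp_continuous (by fun_prop) fun _ => mul_pos hy (exp_pos _)

theorem continuous_hazard (hc : ContinuousOn B (Ioi 0)) {y : ℝ} (hy : 0 < y) :
    Continuous (hazard B y) :=
  intervalIntegral.continuous_primitive
    (fun _ _ => (continuous_comp_mul_exp_neg hc hy).intervalIntegrable _ _) 0

theorem hazard_le_hazard (hc : ContinuousOn B (Ioi 0)) (hpos : ∀ x > 0, 0 ≤ B x) {y : ℝ}
    (hy : 0 < y) {s t : ℝ} (hst : s ≤ t) :
    hazard B y s ≤ hazard B y t := by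
  have hint := fun a b => (continuous_comp_mul_exp_neg hc hy).intervalIntegrable (μ := volume) a b
  rw [hazard, hazard, ← intervalIntegral.integral_add_adjacent_intervals (hint 0 s) (hint s t)]
  exact le_add_of_nonneg_right
    (intervalIntegral.integral_nonneg hst fun _ _ => hpos _ (mul_pos hy (exp_pos _)))

theorem hazard_nonneg (hc : ContinuousOn B (Ioi 0)) (hpos : ∀ x > 0, 0 ≤ B x) {y t : ℝ}
    (hy : 0 < y) (ht : 0 ≤ t) : 0 ≤ hazard B y t :=
  hazard_zero (B := B) y ▸ hazard_le_hazard hc hpos hy ht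

theorem integral_comp_mul_exp_eq_hazard_sub (hc : ContinuousOn B (Ioi 0)) {x : ℝ} (hx : 0 < x)
    (t τ : ℝ) :
    ∫ s in (0:ℝ)..τ, B (x * exp s) = hazard B (x * exp t) t - hazard B (x * exp t) (t - τ) := by
  have hint := fun a b =>
    (continuous_comp_mul_exp_neg hc (mul_pos hx (exp_pos t))).intervalIntegrable (μ := volume) a b
  have h := intervalIntegral.integral_comp_sub_left (a := 0) (b := τ)
    (fun s => B (x * exp t * exp (-s))) t
  rw [sub_zero] at h
  rw [hazard, hazard, intervalIntegral.integral_interval_sub_left (hint 0 t) (hint 0 (t - τ)), ← h]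
  congr 1 with s
  rw [mul_assoc, ← exp_add, neg_sub, add_sub_cancel]

theorem mild_rhs_eq_source_add_gainOp (hc : ContinuousOn B (Ioi 0)) (f : ℝ → ℝ)
    (ψ : ℝ → ℝ → ℝ) {x : ℝ} (hx : 0 < x) (t : ℝ) :
    f (x * exp t) * exp (-∫ s in (0:ℝ)..t, B (x * exp s))
      + 2 * ∫ τ in (0:ℝ)..t,
          B (x * exp τ) * exp (-∫ s in (0:ℝ)..τ, B (x * exp s)) * ψ (t - τ) (x * exp τ / 2)
      = source B f t (x * exp t) + gainOp B (alongChar ψ) t (x * exp t) := by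
  have hshift : ∀ τ, x * exp τ = x * exp t * exp (-(t - τ)) := fun τ => by
    rw [mul_assoc, ← exp_add, neg_sub, add_sub_cancel]
  simp_rw [integral_comp_mul_exp_eq_hazard_sub hc hx t]
  rw [sub_self, hazard_zero, sub_zero]
  have h := intervalIntegral.integral_comp_sub_left (a := 0) (b := t)
    (fun σ => B (x * exp t * exp (-σ)) * exp (hazard B (x * exp t) σ - hazard B (x * exp t) t) *
      alongChar ψ σ (x * exp t / 2)) t
  rw [sub_zero, sub_self] at h
  rw [source, gainOp, ← h]
  congr 2
  refine intervalIntegral.integral_congr fun τ _ => ?_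
  rw [alongChar, ← hshift, div_mul_eq_mul_div, ← hshift, neg_sub]

theorem IsCharSol.isMildSol (hc : ContinuousOn B (Ioi 0)) {f : ℝ → ℝ} {u : ℝ → ℝ → ℝ}
    (hu : IsCharSol B f u) : IsMildSol B f fun t x => u t (x * exp t) := by
  intro t ht x hx
  have hback : alongChar (fun t x => u t (x * exp t)) = u := by
    ext σ z
    rw [alongChar, mul_assoc, ← exp_add, neg_add_cancel, exp_zero, mul_one]
  have h := mild_rhs_eq_source_add_gainOp hc f (fun t x => u t (x * exp t)) hx t
  rw [hback] at h
  exact (hu t ht _ (mul_pos hx (exp_pos t))).trans h.symm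

theorem _root_.IsMildSol.isCharSol_alongChar (hc : ContinuousOn B (Ioi 0)) {f : ℝ → ℝ}
    {ψ : ℝ → ℝ → ℝ} (hψ : IsMildSol B f ψ) : IsCharSol B f (alongChar ψ) := by
  intro t ht y hy
  have hx : 0 < y * exp (-t) := mul_pos hy (exp_pos _)
  have hback : y * exp (-t) * exp t = y := by
    rw [mul_assoc, ← exp_add, neg_add_cancel, exp_zero, mul_one]
  have h := hψ t ht _ hx
  rw [mild_rhs_eq_source_add_gainOp hc f ψ hx, hback] at h
  exact h

theorem continuous_gainOp_kernel (hc : ContinuousOn B (Ioi 0)) {y : ℝ} (hy : 0 < y) (t : ℝ) :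
    Continuous fun σ => B (y * exp (-σ)) * exp (hazard B y σ - hazard B y t) :=
  (continuous_comp_mul_exp_neg hc hy).mul ((continuous_hazard hc hy).sub continuous_const).rexp

theorem aemeasurable_gainOp (hc : ContinuousOn B (Ioi 0)) (u : ℝ → ℝ → ℝ) {y : ℝ} (hy : 0 < y)
    (T : ℝ) : AEMeasurable (fun t => gainOp B u t y) (volume.restrict (Ioc 0 T)) := by
  have h : (fun t => gainOp B u t y) = fun t => 2 *
      (∫ σ in (0:ℝ)..t, B (y * exp (-σ)) * exp (hazard B y σ) * u σ (y / 2))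
        / exp (hazard B y t) := by
    ext t
    rw [gainOp, mul_div_assoc, ← intervalIntegral.integral_div]
    refine congrArg (2 * ·) (intervalIntegral.integral_congr fun σ _ => ?_)
    rw [exp_sub]
    ring
  rw [h]
  exact (aemeasurable_const.mul (aemeasurable_primitive _ T)).div
    (continuous_hazard hc hy).rexp.aemeasurable

theorem abs_gainOp_kernel_mul_le (hc : ContinuousOn B (Ioi 0)) (hpos : ∀ x > 0, 0 ≤ B x)
    {y M : ℝ} (hy : 0 < y) (hM : ∀ z ∈ Ioc 0 y, B z ≤ M) {σ t : ℝ} (hσ : σ ∈ Icc 0 t) (v : ℝ) :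
    |B (y * exp (-σ)) * exp (hazard B y σ - hazard B y t) * v| ≤ M * |v| := by
  have hz : y * exp (-σ) ∈ Ioc 0 y :=
    ⟨mul_pos hy (exp_pos _), mul_le_of_le_one_right hy.le (exp_le_one_iff.2 (neg_nonpos.2 hσ.1))⟩
  have hB := hpos _ hz.1
  have hexp : exp (hazard B y σ - hazard B y t) ≤ 1 :=
    exp_le_one_iff.2 (sub_nonpos.2 (hazard_le_hazard hc hpos hy hσ.2))
  rw [abs_mul, abs_mul, abs_of_nonneg hB, abs_of_pos (exp_pos _)]
  gcongr
  calc B (y * exp (-σ)) * exp (hazard B y σ - hazard B y t) ≤ B (y * exp (-σ)) * 1 := by gcongr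
    _ ≤ M := by rw [mul_one]; exact hM _ hz

theorem abs_gainOp_le (hc : ContinuousOn B (Ioi 0)) (hpos : ∀ x > 0, 0 ≤ B x)
    {u : ℝ → ℝ → ℝ} {y M : ℝ} (hy : 0 < y) (hM : ∀ z ∈ Ioc 0 y, B z ≤ M) {t : ℝ} (ht : 0 ≤ t)
    {g : ℝ → ℝ} (hg : IntervalIntegrable g volume 0 t) (hug : ∀ σ ∈ Ioc 0 t, |u σ (y / 2)| ≤ g σ) :
    |gainOp B u t y| ≤ 2 * M * ∫ σ in (0:ℝ)..t, g σ := by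
  rw [gainOp, abs_mul, abs_two, mul_assoc, ← intervalIntegral.integral_const_mul]
  gcongr
  rw [← Real.norm_eq_abs]
  refine intervalIntegral.norm_integral_le_of_norm_le ht (ae_of_all _ fun σ hσ => ?_)
    (hg.const_mul M)
  rw [Real.norm_eq_abs]
  have hM0 : 0 ≤ M := (hpos y hy).trans (hM y ⟨hy, le_rfl⟩)
  exact (abs_gainOp_kernel_mul_le hc hpos hy hM (Ioc_subset_Icc_self hσ) _).trans
    (mul_le_mul_of_nonneg_left (hug σ hσ) hM0)

theorem gainOp_sub (hc : ContinuousOn B (Ioi 0)) {u v : ℝ → ℝ → ℝ} {y t : ℝ} (hy : 0 < y)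
    (hu : IntervalIntegrable (fun σ => u σ (y / 2)) volume 0 t)
    (hv : IntervalIntegrable (fun σ => v σ (y / 2)) volume 0 t) :
    gainOp B u t y - gainOp B v t y = gainOp B (u - v) t y := by
  have hk := (continuous_gainOp_kernel hc hy t).continuousOn (s := uIcc 0 t)
  rw [gainOp, gainOp, gainOp, ← mul_sub,
    ← intervalIntegral.integral_sub (hu.continuousOn_mul hk) (hv.continuousOn_mul hk)]
  simp only [Pi.sub_apply, mul_sub]

theorem continuous_source (hc : ContinuousOn B (Ioi 0)) (f : ℝ → ℝ) {y : ℝ} (hy : 0 < y) :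
    Continuous fun t => source B f t y :=
  continuous_const.mul (continuous_hazard hc hy).neg.rexp

theorem aemeasurable_iterate_gainOp_source (hc : ContinuousOn B (Ioi 0)) (f : ℝ → ℝ) (n : ℕ)
    {y : ℝ} (hy : 0 < y) (T : ℝ) :
    AEMeasurable (fun t => (gainOp B)^[n] (source B f) t y) (volume.restrict (Ioc 0 T)) := by
  cases n with
  | zero => exact (continuous_source hc f hy).aemeasurable
  | succ n =>
    simp only [Function.iterate_succ_apply']
    exact aemeasurable_gainOp hc _ hy T

theorem abs_iterate_gainOp_source_le (hc : ContinuousOn B (Ioi 0)) (hpos : ∀ x > 0, 0 ≤ B x)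
    {f : ℝ → ℝ} {Y M C : ℝ} (hM : ∀ z ∈ Ioc 0 Y, B z ≤ M) (hC : ∀ z ∈ Ioc 0 Y, |f z| ≤ C)
    (n : ℕ) {z t : ℝ} (hz : z ∈ Ioc 0 Y) (ht : 0 ≤ t) :
    |(gainOp B)^[n] (source B f) t z| ≤ C * ((2 * M * t) ^ n / n.factorial) := by
  induction n generalizing z t with
  | zero =>
    rw [Function.iterate_zero_apply, source, abs_mul, abs_of_pos (exp_pos _)]
    simpa using (mul_le_of_le_one_right (abs_nonneg _)
      (exp_le_one_iff.2 (neg_nonpos.2 (hazard_nonneg hc hpos hz.1 ht)))).trans (hC z hz)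
  | succ n ih =>
    rw [Function.iterate_succ_apply', ← mul_integral_pow_div_factorial]
    exact abs_gainOp_le hc hpos hz.1 (fun w hw => hM w ⟨hw.1, hw.2.trans hz.2⟩) ht
      ((by fun_prop : Continuous fun σ : ℝ => C * ((2 * M * σ) ^ n / n.factorial))
        |>.intervalIntegrable _ _)
      fun σ hσ => ih ⟨half_pos hz.1, (half_le_self hz.1.le).trans hz.2⟩ hσ.1.le

theorem summable_iterate_gainOp_source (hc : ContinuousOn B (Ioi 0)) (hpos : ∀ x > 0, 0 ≤ B x)
    {f : ℝ → ℝ} {Y M C : ℝ} (hM : ∀ z ∈ Ioc 0 Y, B z ≤ M) (hC : ∀ z ∈ Ioc 0 Y, |f z| ≤ C)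
    {z t : ℝ} (hz : z ∈ Ioc 0 Y) (ht : 0 ≤ t) :
    Summable fun n => (gainOp B)^[n] (source B f) t z :=
  .of_norm_bounded ((Real.summable_pow_div_factorial (2 * M * t)).mul_left C)
    fun n => abs_iterate_gainOp_source_le hc hpos hM hC n hz ht

theorem abs_seriesSol_le (hc : ContinuousOn B (Ioi 0)) (hpos : ∀ x > 0, 0 ≤ B x)
    {f : ℝ → ℝ} {Y M C : ℝ} (hM : ∀ z ∈ Ioc 0 Y, B z ≤ M) (hC : ∀ z ∈ Ioc 0 Y, |f z| ≤ C)
    {z t : ℝ} (hz : z ∈ Ioc 0 Y) (ht : 0 ≤ t) :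
    |seriesSol B f t z| ≤ C * exp (2 * M * t) := by
  rw [← Real.norm_eq_abs, Real.exp_eq_exp_ℝ]
  exact tsum_of_norm_bounded ((NormedSpace.expSeries_div_hasSum_exp (2 * M * t)).mul_left C)
    fun n => abs_iterate_gainOp_source_le hc hpos hM hC n hz ht

theorem _root_.Bhyp.exists_bound (hB : Bhyp B) (R : ℝ) :
    ∃ M, 0 ≤ M ∧ ∀ z ∈ Ioc 0 R, B z ≤ M := by
  obtain ⟨hc, -, ε, hε, Cε, hCε⟩ := hB
  obtain ⟨C, hC⟩ := isCompact_Icc.exists_bound_of_continuousOn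
    (hc.mono fun z (hz : z ∈ Icc ε R) => show 0 < z from hε.trans_le hz.1)
  refine ⟨max (max Cε C) 0, le_max_right _ _, fun z hz => ?_⟩
  rcases lt_or_ge z ε with h | h
  · exact (hCε z hz.1 h).trans ((le_max_left _ _).trans (le_max_left _ _))
  · exact (le_abs_self _).trans
      ((hC z ⟨h, hz.2⟩).trans ((le_max_right _ _).trans (le_max_left _ _)))


theorem exists_bound_seriesSol {f : ℝ → ℝ} (hB : Bhyp B) (hf : LocBddOn f) (T : ℝ) {Y : ℝ}
    (hY : 0 < Y) : ∃ S, ∀ t ∈ Icc 0 T, ∀ z ∈ Ioc 0 Y, |seriesSol B f t z| ≤ S := by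
  obtain ⟨M, hM0, hM⟩ := hB.exists_bound Y
  obtain ⟨C, hC⟩ := hf Y hY
  have hC' : ∀ z ∈ Ioc 0 Y, |f z| ≤ C := fun z hz => hC z hz.1 hz.2
  have hC0 : 0 ≤ C := (abs_nonneg _).trans (hC' Y ⟨hY, le_rfl⟩)
  refine ⟨C * exp (2 * M * T), fun t ht z hz =>
    (abs_seriesSol_le hB.1 hB.2.1 hM hC' hz ht.1).trans ?_⟩
  gcongr
  exact ht.2

theorem isCharSol_seriesSol {f : ℝ → ℝ} (hB : Bhyp B) (hf : LocBddOn f) :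
    IsCharSol B f (seriesSol B f) := by
  intro t ht y hy
  have hc := hB.1
  have hpos := hB.2.1
  obtain ⟨M, hM0, hM⟩ := hB.exists_bound y
  obtain ⟨C, hC⟩ := hf y hy
  have hC' : ∀ z ∈ Ioc 0 y, |f z| ≤ C := fun z hz => hC z hz.1 hz.2
  have hC0 : 0 ≤ C := (abs_nonneg _).trans (hC' y ⟨hy, le_rfl⟩)
  have hy2 : y / 2 ∈ Ioc 0 y := ⟨half_pos hy, half_le_self hy.le⟩
  -- dominated convergence, with the summable constants `M * C (2 M t)^n / n!` as bounds
  have hgain : HasSum (fun n => gainOp B ((gainOp B)^[n] (source B f)) t y)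
      (gainOp B (seriesSol B f) t y) := by
    refine HasSum.mul_left 2 (intervalIntegral.hasSum_integral_of_dominated_convergence
      (fun n _ => M * (C * ((2 * M * t) ^ n / n.factorial))) (fun n => ?_) (fun n => ?_)
      (ae_of_all _ fun _ _ => ((Real.summable_pow_div_factorial _).mul_left C).mul_left M)
      intervalIntegrable_const (ae_of_all _ fun σ hσ => ?_))
    · rw [uIoc_of_le ht]
      exact ((continuous_gainOp_kernel hc hy t).aemeasurable.mul
        (aemeasurable_iterate_gainOp_source hc f n hy2.1 t)).aestronglyMeasurable
    · refine ae_of_all _ fun σ hσ => ?_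
      rw [uIoc_of_le ht] at hσ
      rw [Real.norm_eq_abs]
      refine (abs_gainOp_kernel_mul_le hc hpos hy hM (Ioc_subset_Icc_self hσ) _).trans ?_
      gcongr
      refine (abs_iterate_gainOp_source_le hc hpos hM hC' n hy2 hσ.1.le).trans ?_
      have := hσ.1.le
      gcongr
      exact hσ.2
    · rw [uIoc_of_le ht] at hσ
      exact (summable_iterate_gainOp_source hc hpos hM hC' hy2 hσ.1.le).hasSum.mul_left _
  rw [seriesSol, (summable_iterate_gainOp_source hc hpos hM hC' ⟨hy, le_rfl⟩ ht).tsum_eq_zero_add]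
  simp only [Function.iterate_succ_apply', Function.iterate_zero_apply]
  rw [hgain.tsum_eq]

theorem IsCharSol.aemeasurable (hc : ContinuousOn B (Ioi 0)) {f : ℝ → ℝ} {u : ℝ → ℝ → ℝ}
    (hu : IsCharSol B f u) {y : ℝ} (hy : 0 < y) (T : ℝ) :
    AEMeasurable (fun t => u t y) (volume.restrict (Ioc 0 T)) :=
  ((continuous_source hc f hy).aemeasurable.add (aemeasurable_gainOp hc u hy T)).congr
    ((ae_restrict_mem measurableSet_Ioc).mono fun t ht => (hu t ht.1.le y hy).symm)

theorem IsCharSol.intervalIntegrable (hc : ContinuousOn B (Ioi 0)) {f : ℝ → ℝ}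
    {u : ℝ → ℝ → ℝ} (hu : IsCharSol B f u) {y T S : ℝ} (hy : 0 < y) (hT : 0 ≤ T)
    (hS : ∀ t ∈ Ioc 0 T, |u t y| ≤ S) : IntervalIntegrable (fun t => u t y) volume 0 T := by
  rw [intervalIntegrable_iff_integrableOn_Ioc_of_le hT]
  exact Integrable.of_bound (hu.aemeasurable hc hy T).aestronglyMeasurable S
    ((ae_restrict_mem measurableSet_Ioc).mono hS)

theorem IsCharSol.eq (hB : Bhyp B) {f : ℝ → ℝ} {u v : ℝ → ℝ → ℝ} (hu : IsCharSol B f u)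
    (hv : IsCharSol B f v) {T Y : ℝ} (hY : 0 < Y)
    (hbu : ∃ S, ∀ t ∈ Icc 0 T, ∀ z ∈ Ioc 0 Y, |u t z| ≤ S)
    (hbv : ∃ S, ∀ t ∈ Icc 0 T, ∀ z ∈ Ioc 0 Y, |v t z| ≤ S) {t : ℝ} (ht : t ∈ Icc 0 T) :
    u t Y = v t Y := by
  obtain ⟨M, hM0, hM⟩ := hB.exists_bound Y
  obtain ⟨Su, hSu⟩ := hbu
  obtain ⟨Sv, hSv⟩ := hbv
  have hYj : ∀ j : ℕ, Y / 2 ^ j ∈ Ioc 0 Y := fun j =>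
    ⟨by positivity, div_le_self hY.le (one_le_pow₀ one_le_two)⟩
  have hT : 0 ≤ T := ht.1.trans ht.2
  have hiu : ∀ j : ℕ, IntervalIntegrable (fun σ => u σ (Y / 2 ^ j)) volume 0 T := fun j =>
    hu.intervalIntegrable hB.1 (hYj j).1 hT fun σ hσ => hSu σ (Ioc_subset_Icc_self hσ) _ (hYj j)
  have hiv : ∀ j : ℕ, IntervalIntegrable (fun σ => v σ (Y / 2 ^ j)) volume 0 T := fun j =>
    hv.intervalIntegrable hB.1 (hYj j).1 hT fun σ hσ => hSv σ (Ioc_subset_Icc_self hσ) _ (hYj j)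
  have hw := fun j => (hiu j).sub (hiv j)
  -- along the halving sequence `Y / 2 ^ j`, the difference `u - v` solves the homogeneous equation
  have h := eq_zero_of_abs_le_mul_integral_succ (by positivity : 0 ≤ 2 * M) hw
    (fun j σ hσ => (abs_sub _ _).trans (add_le_add (hSu σ hσ _ (hYj j)) (hSv σ hσ _ (hYj j))))
    (fun j σ hσ => ?_) 0 ht
  · simpa [sub_eq_zero] using h
  have hhalf : Y / 2 ^ j / 2 = Y / 2 ^ (j + 1) := by rw [pow_succ, div_div]
  have hsub : uIcc 0 σ ⊆ uIcc 0 T := uIcc_subset_uIcc left_mem_uIcc (Icc_subset_uIcc hσ)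
  rw [hu σ hσ.1 _ (hYj j).1, hv σ hσ.1 _ (hYj j).1, add_sub_add_left_eq_sub,
    gainOp_sub hB.1 (hYj j).1 (hhalf ▸ (hiu (j + 1)).mono_set hsub)
      (hhalf ▸ (hiv (j + 1)).mono_set hsub)]
  exact abs_gainOp_le hB.1 hB.2.1 (hYj j).1 (fun z hz => hM z ⟨hz.1, hz.2.trans (hYj j).2⟩)
    hσ.1 ((hw (j + 1)).abs.mono_set hsub) fun τ _ => by simp only [Pi.sub_apply, hhalf, le_refl]

theorem _root_.LocBdd2.exists_bound_alongChar {ψ : ℝ → ℝ → ℝ} (hψ : LocBdd2 ψ) (T Y : ℝ) :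
    ∃ S, ∀ t ∈ Icc 0 T, ∀ z ∈ Ioc 0 Y, |alongChar ψ t z| ≤ S := by
  obtain ⟨S, hS⟩ := hψ (max (max T Y) 1) (lt_max_of_lt_right one_pos)
  refine ⟨S, fun t ht z hz => hS t _ ht.1 (ht.2.trans ?_) (mul_pos hz.1 (exp_pos _)) ?_⟩
  · exact (le_max_left _ _).trans (le_max_left _ _)
  · calc z * exp (-t) ≤ z := mul_le_of_le_one_right hz.1.le (exp_le_one_iff.2 (neg_nonpos.2 ht.1))
      _ ≤ max (max T Y) 1 := hz.2.trans ((le_max_right _ _).trans (le_max_left _ _))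

end DualMitosis

open DualMitosis

/-- Well-posedness of the dual mitosis equation: for every locally bounded initial datum `f`
there exists a unique locally bounded mild solution. -/
theorem stmt0 (B : ℝ → ℝ) (hB : Bhyp B) (f : ℝ → ℝ) (hf : LocBddOn f) :
    ∃ φ : ℝ → ℝ → ℝ, (LocBdd2 φ ∧ IsMildSol B f φ) ∧
      ∀ ψ : ℝ → ℝ → ℝ, LocBdd2 ψ → IsMildSol B f ψ →
        ∀ t ≥ 0, ∀ x > 0, ψ t x = φ t x := by
  refine ⟨fun t x => seriesSol B f t (x * exp t),
    ⟨fun r hr => ?_, (isCharSol_seriesSol hB hf).isMildSol hB.1⟩, fun ψ hψb hψ t ht x hx => ?_⟩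
  · obtain ⟨S, hS⟩ := exists_bound_seriesSol hB hf r (by positivity : 0 < r * exp r)
    exact ⟨S, fun t x ht htr hx hxr => hS t ⟨ht, htr⟩ _ ⟨by positivity, by gcongr⟩⟩
  · have hy : 0 < x * exp t := by positivity
    have h := (hψ.isCharSol_alongChar hB.1).eq hB (isCharSol_seriesSol hB hf) hy
      (hψb.exists_bound_alongChar t _) (exists_bound_seriesSol hB hf t hy) ⟨ht, le_rfl⟩
    rwa [alongChar, mul_assoc, ← exp_add, add_neg_cancel, exp_zero, mul_one] at h
end
end

section
/- Assume B : (0,∞) → [0,∞) is continuous and bounded on some neighborhood of 0, let f : (0,∞) → ℝ be locally bounded, and let φ be the unique locally bounded mild solution of the dual mitosis equation with initial datum f. If f is nonnegative then φ is nonnegative, and if f is continuous then φ is continuous on [0,∞) × (0,∞). -/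
open MeasureTheory Real Set Filter Topology

noncomputable section

/-!
Along the characteristics, in the coordinates `γ = log x + t`, the mild formulation becomes the
fixed-point equation `ψ = P ψ` of a Volterra operator `P` (`Mitosis.picardMap`) whose kernel is
bounded on every half-line `γ ≤ A`. By induction the Picard iterates `P^[k] 0` stay within
`M (2 C t)^k / k!` of the locally bounded solution, so they converge to it locally uniformly.
`P` preserves nonnegativity, and joint continuity when `f` is continuous; both properties pass
to the limit.

The induction needs the integrand of `P ψ` to be integrable although `φ` is not assumed
measurable. Along a line, `ψ` is a continuous expression in the primitive of that integrand,
and the primitive of an arbitrary function on `[0, T]` is continuous off one point (beyond the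
supremum of the integrability region it is the junk value `0`), hence a.e.-measurable.
-/

lemma exists_continuousOn_primitive_Icc_diff_singleton (h : ℝ → ℝ) (T : ℝ) :
    ∃ t₀, ContinuousOn (fun t => ∫ u in (0:ℝ)..t, h u) (Icc 0 T \ {t₀}) := by
  set I := {s ∈ Icc 0 T | IntervalIntegrable h volume 0 s}
  have hI : BddAbove I := ⟨T, fun s hs => hs.1.2⟩
  refine ⟨sSup I, fun s hs => ?_⟩
  rcases lt_or_gt_of_ne hs.2 with hlt | hgt
  · have h0 : (0:ℝ) ∈ I := ⟨⟨le_rfl, hs.1.1.trans hs.1.2⟩, .refl⟩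
    obtain ⟨t₁, ht₁, hst₁⟩ := exists_lt_of_lt_csSup ⟨0, h0⟩ hlt
    have hc := intervalIntegral.continuousOn_primitive_interval' ht₁.2 left_mem_uIcc
    rw [uIcc_of_le ht₁.1.1] at hc
    refine (hc s ⟨hs.1.1, hst₁.le⟩).mono_of_mem_nhdsWithin ?_
    exact mem_nhdsWithin.2 ⟨Iio t₁, isOpen_Iio, hst₁, fun u hu => ⟨hu.2.1.1, hu.1.le⟩⟩
  · have hzero : ∀ u ∈ Icc 0 T, sSup I < u → ∫ v in (0:ℝ)..u, h v = 0 := fun u hu hlt =>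
      intervalIntegral.integral_undef fun hint => hlt.not_ge (le_csSup hI ⟨hu, hint⟩)
    refine continuousWithinAt_const.congr_of_eventuallyEq ?_ (hzero s hs.1 hgt)
    filter_upwards [self_mem_nhdsWithin, mem_nhdsWithin_of_mem_nhds (Ioi_mem_nhds hgt)]
      with u hu hu'
    exact hzero u hu.1 hu'

lemma aestronglyMeasurable_primitive (h : ℝ → ℝ) (T : ℝ) :
    AEStronglyMeasurable (fun t => ∫ u in (0:ℝ)..t, h u) (volume.restrict (Icc 0 T)) := by
  obtain ⟨t₀, hc⟩ := exists_continuousOn_primitive_Icc_diff_singleton h T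
  have hae : (Icc 0 T \ {t₀} : Set ℝ) =ᵐ[volume] Icc 0 T :=
    sdiff_ae_eq_self.2 (measure_mono_null inter_subset_right (measure_singleton t₀))
  rw [← Measure.restrict_congr_set hae]
  exact hc.aestronglyMeasurable (measurableSet_Icc.diff (measurableSet_singleton _))

lemma mul_integral_mul_pow_div_factorial (M c t : ℝ) (k : ℕ) :
    c * ∫ u in (0:ℝ)..t, M * (c * u) ^ k / k.factorial
      = M * (c * t) ^ (k + 1) / (k + 1).factorial := by
  have hfun : (fun u : ℝ => M * (c * u) ^ k / k.factorial)
      = fun u => M * c ^ k / k.factorial * u ^ k := by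
    ext u; rw [mul_pow]; ring
  rw [hfun, intervalIntegral.integral_const_mul, integral_pow, Nat.factorial_succ]
  push_cast
  field_simp
  ring

namespace Mitosis

def logRate (B : ℝ → ℝ) (γ : ℝ) : ℝ := B (exp γ)

def cumRate (B : ℝ → ℝ) (γ : ℝ) : ℝ := ∫ s in (0:ℝ)..γ, logRate B s

def divDensity (B : ℝ → ℝ) (γ : ℝ) : ℝ := logRate B γ * exp (-cumRate B γ)

def logCoord (φ : ℝ → ℝ → ℝ) (t γ : ℝ) : ℝ := φ t (exp (γ - t))

/-- For `x = exp (γ - t)`, `exp (cumRate B (γ - t) - cumRate B γ)` is the survival factor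
`exp (-∫₀ᵗ B (x eˢ) ds)` of the mild formulation, and `u` is `t - τ`. -/
def picardMap (B f : ℝ → ℝ) (ψ : ℝ → ℝ → ℝ) (t γ : ℝ) : ℝ :=
  exp (cumRate B (γ - t)) * (exp (-cumRate B γ) * f (exp γ)
    + 2 * ∫ u in (0:ℝ)..t, divDensity B (γ - u) * ψ u (γ - log 2))

def picardIter (B f : ℝ → ℝ) (k : ℕ) : ℝ → ℝ → ℝ := (picardMap B f)^[k] 0

lemma logCoord_log_add (φ : ℝ → ℝ → ℝ) (t : ℝ) {x : ℝ} (hx : 0 < x) :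
    logCoord φ t (log x + t) = φ t x := by
  rw [logCoord, add_sub_cancel_right, exp_log hx]

lemma picardIter_succ (B f : ℝ → ℝ) (k : ℕ) :
    picardIter B f (k + 1) = picardMap B f (picardIter B f k) :=
  Function.iterate_succ_apply' _ _ _

lemma exists_abs_logCoord_le {φ : ℝ → ℝ → ℝ} (hφ : LocBdd2 φ) (T A : ℝ) :
    ∃ M, 0 ≤ M ∧ ∀ t ∈ Icc 0 T, ∀ γ ≤ A, |logCoord φ t γ| ≤ M := by
  obtain ⟨M, hM⟩ := hφ (max T (max 1 (exp A))) (by positivity)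
  refine ⟨max M 0, le_max_right _ _, fun t ht γ hγ => (hM t _ ht.1 ?_ (exp_pos _) ?_).trans
    (le_max_left _ _)⟩
  · exact ht.2.trans (le_max_left _ _)
  · exact (exp_le_exp.2 (by linarith [ht.1])).trans ((le_max_right _ _).trans (le_max_right _ _))

section

variable {B : ℝ → ℝ}

lemma continuous_logRate (hB : Bhyp B) : Continuous (logRate B) :=
  hB.1.comp_continuous continuous_exp exp_pos

lemma logRate_nonneg (hB : Bhyp B) (γ : ℝ) : 0 ≤ logRate B γ :=
  hB.2.1 _ (exp_pos γ)

lemma exists_logRate_le (hB : Bhyp B) (A : ℝ) : ∃ C, 0 ≤ C ∧ ∀ γ ≤ A, logRate B γ ≤ C := by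
  obtain ⟨hBc, -, ε, hε, C₁, hC₁⟩ := hB
  obtain ⟨C₂, hC₂⟩ := (isCompact_Icc (a := ε) (b := exp A)).exists_bound_of_continuousOn
    (hBc.mono fun x hx => hε.trans_le hx.1)
  refine ⟨max (max C₁ C₂) 0, le_max_right _ _, fun γ hγ => ?_⟩
  rcases lt_or_ge (exp γ) ε with h | h
  · exact (hC₁ _ (exp_pos γ) h).trans ((le_max_left _ _).trans (le_max_left _ _))
  · exact (le_abs_self _).trans <| (hC₂ _ ⟨h, exp_le_exp.2 hγ⟩).trans
      ((le_max_right _ _).trans (le_max_left _ _))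

lemma cumRate_sub_cumRate (hB : Bhyp B) (a b : ℝ) :
    cumRate B b - cumRate B a = ∫ s in a..b, logRate B s :=
  intervalIntegral.integral_interval_sub_left ((continuous_logRate hB).intervalIntegrable _ _)
    ((continuous_logRate hB).intervalIntegrable _ _)

lemma continuous_cumRate (hB : Bhyp B) : Continuous (cumRate B) :=
  intervalIntegral.continuous_primitive
    (fun _ _ => (continuous_logRate hB).intervalIntegrable _ _) 0

lemma monotone_cumRate (hB : Bhyp B) : Monotone (cumRate B) := fun a b hab => by
  rw [← sub_nonneg, cumRate_sub_cumRate hB]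
  exact intervalIntegral.integral_nonneg hab fun s _ => logRate_nonneg hB s

lemma continuous_divDensity (hB : Bhyp B) : Continuous (divDensity B) :=
  (continuous_logRate hB).mul (continuous_exp.comp (continuous_cumRate hB).neg)

lemma logCoord_eq_picardMap (hB : Bhyp B) {f : ℝ → ℝ} {φ : ℝ → ℝ → ℝ} (hsol : IsMildSol B f φ)
    {t : ℝ} (ht : 0 ≤ t) (γ : ℝ) :
    logCoord φ t γ = picardMap B f (logCoord φ) t γ := by
  have hB' : ∀ s, B (exp (γ - t) * exp s) = logRate B (s + (γ - t)) := fun s => by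
    rw [logRate, ← exp_add, add_comm]
  have hcum : ∀ τ, ∫ s in (0:ℝ)..τ, B (exp (γ - t) * exp s)
      = cumRate B (γ - (t - τ)) - cumRate B (γ - t) := fun τ => by
    simp_rw [hB']
    rw [intervalIntegral.integral_comp_add_right (logRate B), zero_add, cumRate_sub_cumRate hB]
    ring_nf
  have hhalf : ∀ τ, exp (γ - t) * exp τ / 2 = exp (γ - log 2 - (t - τ)) := fun τ => by
    rw [← exp_add, show γ - log 2 - (t - τ) = γ - t + τ - log 2 by ring, exp_sub,
      exp_log two_pos]
  set g := fun u => divDensity B (γ - u) * logCoord φ u (γ - log 2)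
  have hintegrand : ∀ τ, B (exp (γ - t) * exp τ) * exp (-∫ s in (0:ℝ)..τ, B (exp (γ - t) * exp s))
      * φ (t - τ) (exp (γ - t) * exp τ / 2) = exp (cumRate B (γ - t)) * g (t - τ) := fun τ => by
    rw [hcum, hhalf, hB', show τ + (γ - t) = γ - (t - τ) by ring, neg_sub, exp_sub]
    simp only [g, divDensity, logCoord, exp_neg]
    ring
  rw [logCoord, hsol t ht _ (exp_pos _), picardMap]
  simp_rw [hintegrand]
  rw [intervalIntegral.integral_const_mul, intervalIntegral.integral_comp_sub_left g, hcum,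
    ← exp_add, sub_add_cancel, sub_self, sub_zero, sub_zero, neg_sub, exp_sub, exp_neg]
  ring

lemma aestronglyMeasurable_picardMap (hB : Bhyp B) (f : ℝ → ℝ) (ψ : ℝ → ℝ → ℝ) (γ T : ℝ) :
    AEStronglyMeasurable (fun t => picardMap B f ψ t γ) (volume.restrict (Icc 0 T)) :=
  ((continuous_exp.comp ((continuous_cumRate hB).comp (continuous_sub_left γ)))
    |>.aestronglyMeasurable).mul
    (aestronglyMeasurable_const.add
      (aestronglyMeasurable_const.mul (aestronglyMeasurable_primitive _ T)))

lemma aestronglyMeasurable_logCoord (hB : Bhyp B) {f : ℝ → ℝ} {φ : ℝ → ℝ → ℝ}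
    (hsol : IsMildSol B f φ) (γ T : ℝ) :
    AEStronglyMeasurable (fun t => logCoord φ t γ) (volume.restrict (Icc 0 T)) := by
  refine (aestronglyMeasurable_picardMap hB f (logCoord φ) γ T).congr ?_
  filter_upwards [ae_restrict_mem measurableSet_Icc] with t ht
  exact (logCoord_eq_picardMap hB hsol ht.1 γ).symm

lemma intervalIntegrable_divDensity_mul_logCoord (hB : Bhyp B) {f : ℝ → ℝ} {φ : ℝ → ℝ → ℝ}
    (hφ : LocBdd2 φ) (hsol : IsMildSol B f φ) (γ γ' : ℝ) {t : ℝ} (ht : 0 ≤ t) :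
    IntervalIntegrable (fun u => divDensity B (γ - u) * logCoord φ u γ') volume 0 t := by
  obtain ⟨M, -, hM⟩ := exists_abs_logCoord_le hφ t γ'
  have hd : IntegrableOn (fun u => divDensity B (γ - u)) (Icc 0 t) :=
    ((continuous_divDensity hB).comp (continuous_sub_left γ)).continuousOn.integrableOn_Icc
  refine IntegrableOn.intervalIntegrable ?_
  rw [uIcc_of_le ht]
  refine hd.mul_bdd (c := M) (aestronglyMeasurable_logCoord hB hsol γ' t) ?_
  filter_upwards [ae_restrict_mem measurableSet_Icc] with u hu
  exact hM u hu γ' le_rfl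

lemma abs_picardMap_sub_le (hB : Bhyp B) (f : ℝ → ℝ) {ψ₁ ψ₂ : ℝ → ℝ → ℝ} {g : ℝ → ℝ}
    {t γ C : ℝ} (ht : 0 ≤ t) (hC : ∀ u ∈ Icc 0 t, logRate B (γ - u) ≤ C)
    (h₁ : IntervalIntegrable (fun u => divDensity B (γ - u) * ψ₁ u (γ - log 2)) volume 0 t)
    (h₂ : IntervalIntegrable (fun u => divDensity B (γ - u) * ψ₂ u (γ - log 2)) volume 0 t)
    (hg : IntervalIntegrable g volume 0 t)
    (hψ : ∀ u ∈ Icc 0 t, |ψ₁ u (γ - log 2) - ψ₂ u (γ - log 2)| ≤ g u) :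
    |picardMap B f ψ₁ t γ - picardMap B f ψ₂ t γ| ≤ 2 * C * ∫ u in (0:ℝ)..t, g u := by
  have hdiff : picardMap B f ψ₁ t γ - picardMap B f ψ₂ t γ = 2 * ∫ u in (0:ℝ)..t,
      exp (cumRate B (γ - t)) * (divDensity B (γ - u) * (ψ₁ u (γ - log 2) - ψ₂ u (γ - log 2))) := by
    simp_rw [mul_sub]
    rw [intervalIntegral.integral_sub (h₁.const_mul _) (h₂.const_mul _),
      intervalIntegral.integral_const_mul, intervalIntegral.integral_const_mul, picardMap,
      picardMap]
    ring
  have hpt : ∀ u ∈ Ioc 0 t, ‖exp (cumRate B (γ - t))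
      * (divDensity B (γ - u) * (ψ₁ u (γ - log 2) - ψ₂ u (γ - log 2)))‖ ≤ C * g u := by
    intro u hu
    have hsurv : exp (cumRate B (γ - t)) * exp (-cumRate B (γ - u)) ≤ 1 := by
      rw [← exp_add, exp_le_one_iff, ← sub_eq_add_neg, sub_nonpos]
      exact monotone_cumRate hB (by linarith [hu.2])
    calc _ = exp (cumRate B (γ - t)) * exp (-cumRate B (γ - u)) * logRate B (γ - u)
          * |ψ₁ u (γ - log 2) - ψ₂ u (γ - log 2)| := by
          rw [Real.norm_eq_abs, divDensity, abs_mul, abs_mul, abs_mul, abs_of_pos (exp_pos _),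
            abs_of_pos (exp_pos _), abs_of_nonneg (logRate_nonneg hB _)]
          ring
      _ ≤ 1 * C * g u := by
          have hb := logRate_nonneg hB (γ - u)
          have hCu := hC u (Ioc_subset_Icc_self hu)
          exact mul_le_mul (mul_le_mul hsurv hCu hb zero_le_one) (hψ u (Ioc_subset_Icc_self hu))
            (abs_nonneg _) (by linarith)
      _ = C * g u := by ring
  calc _ = 2 * |∫ u in (0:ℝ)..t, exp (cumRate B (γ - t))
        * (divDensity B (γ - u) * (ψ₁ u (γ - log 2) - ψ₂ u (γ - log 2)))| := by
        rw [hdiff, abs_mul, abs_two]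
    _ ≤ 2 * ∫ u in (0:ℝ)..t, C * g u := by
        gcongr
        exact intervalIntegral.norm_integral_le_of_norm_le ht (ae_of_all _ hpt) (hg.const_mul C)
    _ = 2 * C * ∫ u in (0:ℝ)..t, g u := by
        rw [intervalIntegral.integral_const_mul, mul_assoc]

lemma continuous_picardMap_left (hB : Bhyp B) (f : ℝ → ℝ) {ψ : ℝ → ℝ → ℝ} {γ : ℝ}
    (hψ : Continuous fun u => ψ u (γ - log 2)) :
    Continuous fun t => picardMap B f ψ t γ := by
  have hint : Continuous fun u => divDensity B (γ - u) * ψ u (γ - log 2) :=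
    ((continuous_divDensity hB).comp (continuous_sub_left γ)).mul hψ
  exact (continuous_exp.comp ((continuous_cumRate hB).comp (continuous_sub_left γ))).mul
    (continuous_const.add (continuous_const.mul
      (intervalIntegral.continuous_primitive (fun _ _ => hint.intervalIntegrable _ _) 0)))

lemma continuous_picardMap (hB : Bhyp B) {f : ℝ → ℝ} (hf : ContinuousOn f (Ioi 0))
    {ψ : ℝ → ℝ → ℝ} (hψ : Continuous (Function.uncurry ψ)) :
    Continuous (Function.uncurry (picardMap B f ψ)) := by
  have hd := continuous_divDensity hB
  have hc := continuous_cumRate hB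
  have hfexp : Continuous fun γ => f (exp γ) := hf.comp_continuous continuous_exp exp_pos
  have hint : Continuous fun q : (ℝ × ℝ) × ℝ =>
      divDensity B (q.1.2 - q.2) * ψ q.2 (q.1.2 - log 2) :=
    (hd.comp (by fun_prop)).mul (hψ.comp (continuous_snd.prodMk (by fun_prop)))
  have hprim : Continuous fun p : ℝ × ℝ =>
      ∫ u in (0:ℝ)..p.1, divDensity B (p.2 - u) * ψ u (p.2 - log 2) :=
    intervalIntegral.continuous_parametric_intervalIntegral_of_continuous hint continuous_fst
  exact (continuous_exp.comp (hc.comp (by fun_prop))).mul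
    (((continuous_exp.comp (hc.comp continuous_snd).neg).mul (hfexp.comp continuous_snd)).add
      (continuous_const.mul hprim))

lemma picardMap_nonneg (hB : Bhyp B) {f : ℝ → ℝ} (hf : ∀ x > 0, 0 ≤ f x) {ψ : ℝ → ℝ → ℝ}
    (hψ : ∀ u ≥ 0, ∀ γ, 0 ≤ ψ u γ) {t : ℝ} (ht : 0 ≤ t) (γ : ℝ) :
    0 ≤ picardMap B f ψ t γ := by
  refine mul_nonneg (exp_pos _).le (add_nonneg (mul_nonneg (exp_pos _).le (hf _ (exp_pos _)))
    (mul_nonneg zero_le_two (intervalIntegral.integral_nonneg ht fun u hu => ?_)))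
  exact mul_nonneg (mul_nonneg (logRate_nonneg hB _) (exp_pos _).le) (hψ u hu.1 _)

lemma continuous_picardIter_left (hB : Bhyp B) (f : ℝ → ℝ) (k : ℕ) (γ : ℝ) :
    Continuous fun t => picardIter B f k t γ := by
  induction k generalizing γ with
  | zero => exact continuous_const
  | succ k ih => rw [picardIter_succ]; exact continuous_picardMap_left hB f (ih _)

lemma continuous_picardIter (hB : Bhyp B) {f : ℝ → ℝ} (hf : ContinuousOn f (Ioi 0)) (k : ℕ) :
    Continuous (Function.uncurry (picardIter B f k)) := by
  induction k with
  | zero => exact continuous_const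
  | succ k ih => rw [picardIter_succ]; exact continuous_picardMap hB hf ih

lemma picardIter_nonneg (hB : Bhyp B) {f : ℝ → ℝ} (hf : ∀ x > 0, 0 ≤ f x) (k : ℕ) :
    ∀ t ≥ 0, ∀ γ, 0 ≤ picardIter B f k t γ := by
  induction k with
  | zero => exact fun _ _ _ => le_rfl
  | succ k ih => rw [picardIter_succ]; exact fun t ht γ => picardMap_nonneg hB hf ih ht γ

theorem exists_abs_logCoord_sub_picardIter_le (hB : Bhyp B) {f : ℝ → ℝ} {φ : ℝ → ℝ → ℝ}
    (hφ : LocBdd2 φ) (hsol : IsMildSol B f φ) (T A : ℝ) :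
    ∃ M C, 0 ≤ M ∧ 0 ≤ C ∧ ∀ k : ℕ, ∀ t ∈ Icc 0 T, ∀ γ ≤ A,
      |logCoord φ t γ - picardIter B f k t γ| ≤ M * (2 * C * t) ^ k / k.factorial := by
  obtain ⟨C, hC0, hC⟩ := exists_logRate_le hB A
  obtain ⟨M, hM0, hM⟩ := exists_abs_logCoord_le hφ T A
  refine ⟨M, C, hM0, hC0, fun k => ?_⟩
  induction k with
  | zero => intro t ht γ hγ; simpa [picardIter] using hM t ht γ hγ
  | succ k ih =>
    intro t ht γ hγ
    have hlog2 : 0 ≤ log 2 := log_nonneg one_le_two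
    rw [logCoord_eq_picardMap hB hsol ht.1, picardIter_succ, ← mul_integral_mul_pow_div_factorial]
    exact abs_picardMap_sub_le hB f ht.1 (fun u hu => hC _ (by linarith [hu.1]))
      (intervalIntegrable_divDensity_mul_logCoord hB hφ hsol γ _ ht.1)
      ((((continuous_divDensity hB).comp (continuous_sub_left γ)).mul
        (continuous_picardIter_left hB f k _)).intervalIntegrable _ _)
      ((by fun_prop : Continuous fun u : ℝ => M * (2 * C * u) ^ k / k.factorial)
        |>.intervalIntegrable _ _)
      (fun u hu => ih u ⟨hu.1, hu.2.trans ht.2⟩ _ (by linarith))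

theorem tendstoLocallyUniformlyOn_picardIter (hB : Bhyp B) {f : ℝ → ℝ} {φ : ℝ → ℝ → ℝ}
    (hφ : LocBdd2 φ) (hsol : IsMildSol B f φ) :
    TendstoLocallyUniformlyOn (fun k => Function.uncurry (picardIter B f k))
      (Function.uncurry (logCoord φ)) atTop (Ici 0 ×ˢ univ) := by
  rintro U hU ⟨t, γ⟩ -
  obtain ⟨M, C, hM0, hC0, hest⟩ :=
    exists_abs_logCoord_sub_picardIter_le hB hφ hsol (t + 1) (γ + 1)
  obtain ⟨ε, hε, hεU⟩ := Metric.mem_uniformity_dist.1 hU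
  have hlim : Tendsto (fun k : ℕ => M * (2 * C * (t + 1)) ^ k / k.factorial) atTop (𝓝 0) := by
    simpa [mul_div_assoc] using
      (FloorSemiring.tendsto_pow_div_factorial_atTop (2 * C * (t + 1))).const_mul M
  refine ⟨Icc 0 (t + 1) ×ˢ Iic (γ + 1), mem_nhdsWithin.2 ⟨Iio (t + 1) ×ˢ Iio (γ + 1),
    isOpen_Iio.prod isOpen_Iio, ⟨by simp, by simp⟩, ?_⟩, ?_⟩
  · rintro ⟨s, η⟩ ⟨⟨hs, hη⟩, hs0, -⟩
    exact ⟨⟨hs0, hs.le⟩, mem_Iic.2 (mem_Iio.1 hη).le⟩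
  · filter_upwards [hlim.eventually (gt_mem_nhds hε)] with k hk ⟨s, η⟩ ⟨hs, hη⟩
    refine hεU ((Real.dist_eq _ _).trans_lt ((hest k s hs η hη).trans_lt (lt_of_le_of_lt ?_ hk)))
    have : 0 ≤ 2 * C * s := mul_nonneg (mul_nonneg zero_le_two hC0) hs.1
    gcongr
    exact hs.2

end

end Mitosis

open Mitosis

theorem stmt1_general (B : ℝ → ℝ) (hB : Bhyp B) (f : ℝ → ℝ)
    (φ : ℝ → ℝ → ℝ) (hφ : LocBdd2 φ) (hsol : IsMildSol B f φ) :
    ((∀ x > 0, 0 ≤ f x) → ∀ t ≥ 0, ∀ x > 0, 0 ≤ φ t x) ∧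
    (ContinuousOn f (Ioi 0) →
      ContinuousOn (Function.uncurry φ) (Ici 0 ×ˢ Ioi 0)) := by
  have hlim := tendstoLocallyUniformlyOn_picardIter hB hφ hsol
  refine ⟨fun hf t ht x hx => ?_, fun hf => ?_⟩
  · rw [← logCoord_log_add φ t hx]
    exact ge_of_tendsto' (hlim.tendsto_at (a := (t, log x + t)) ⟨ht, mem_univ _⟩)
      fun k => picardIter_nonneg hB hf k t ht _
  · have hψ : ContinuousOn (Function.uncurry (logCoord φ)) (Ici 0 ×ˢ univ) :=
      hlim.continuousOn (Frequently.of_forall fun k => (continuous_picardIter hB hf k).continuousOn)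
    have hcoord : ContinuousOn (fun p : ℝ × ℝ => (p.1, log p.2 + p.1)) (Ici 0 ×ˢ Ioi 0) :=
      continuousOn_fst.prodMk ((continuousOn_log.comp continuousOn_snd
        fun p hp => ne_of_gt hp.2).add continuousOn_fst)
    exact (hψ.comp hcoord fun p hp => ⟨hp.1, mem_univ _⟩).congr
      fun p hp => (logCoord_log_add φ p.1 hp.2).symm

/-- If the initial datum `f` is nonnegative then the unique locally bounded mild solution is
nonnegative, and if `f` is continuous then the solution is continuous on `[0,∞) × (0,∞)`. -/
theorem stmt1 (B : ℝ → ℝ) (hB : Bhyp B) (f : ℝ → ℝ) (hf : LocBddOn f)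
    (φ : ℝ → ℝ → ℝ) (hφ : LocBdd2 φ) (hsol : IsMildSol B f φ) :
    ((∀ x > 0, 0 ≤ f x) → ∀ t ≥ 0, ∀ x > 0, 0 ≤ φ t x) ∧
    (ContinuousOn f (Ioi 0) →
      ContinuousOn (Function.uncurry φ) (Ici 0 ×ˢ Ioi 0)) :=
  stmt1_general B hB f φ hφ hsol
end
end

section
/- Assume B : (0,∞) → [0,∞) is continuous and bounded on some neighborhood of 0. Then the family (M_t)_{t≥0} is a semigroup on locally bounded functions: for every locally bounded f : (0,∞) → ℝ and all s, t ≥ 0, M_{t+s} f = M_t (M_s f), i.e. the unique locally bounded mild solution with initial datum f evaluated at time t+s equals the unique locally bounded mild solution with initial datum M_s f evaluated at time t. -/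
open MeasureTheory Real Set Filter Topology

noncomputable section

/-! Along the backward characteristic `τ ↦ (t - τ, x e^τ)` the mild equation restarts: the value
of a mild solution at any point of it is the datum term plus the tail from that point of the
division integral at `(t, x)`. Hence `φ (· + s)` is again a mild solution, with datum `φ s`. The
difference of two locally bounded mild solutions with the same datum solves the equation with zero
datum; as `(x e^τ / 2) e^(t - τ) = x e^t / 2`, the region `x e^t ≤ R` is closed under the division
term, and iterating the equation there bounds the difference by `M (2 C t)^n / n!` for every `n`.
Integrability of the division term needs measurability of `φ` along characteristics, which again
comes from the restart identity, through measurability of arbitrary primitives. -/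

theorem measurable_primitive (q : ℝ → ℝ) (c : ℝ) : Measurable fun a => ∫ b in c..a, q b := by
  classical
  set E := {a | IntervalIntegrable q volume c a}
  have hc : c ∈ E := IntervalIntegrable.refl
  have hint : ∀ u ∈ E, ∀ v ∈ E, IntervalIntegrable q volume u v := fun u hu v hv => hu.symm.trans hv
  have hE : E.OrdConnected := ⟨fun u hu v hv z hz =>
    hu.trans ((hint u hu v hv).mono_set (uIcc_subset_uIcc left_mem_uIcc (Icc_subset_uIcc hz)))⟩
  have hcont : ContinuousOn (fun a => ∫ b in c..a, q b) E := by
    intro a ha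
    obtain ⟨a₁, ha₁, hnhds₁⟩ : ∃ a₁ ∈ E, Ici a₁ ∈ 𝓝[E] a := by
      by_cases h : ∃ b ∈ E, b < a
      · obtain ⟨b, hb, hba⟩ := h
        exact ⟨b, hb, mem_nhdsWithin_of_mem_nhds (Ici_mem_nhds hba)⟩
      · push Not at h
        exact ⟨a, ha, mem_of_superset self_mem_nhdsWithin h⟩
    obtain ⟨a₂, ha₂, hnhds₂⟩ : ∃ a₂ ∈ E, Iic a₂ ∈ 𝓝[E] a := by
      by_cases h : ∃ b ∈ E, a < b
      · obtain ⟨b, hb, hab⟩ := h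
        exact ⟨b, hb, mem_nhdsWithin_of_mem_nhds (Iic_mem_nhds hab)⟩
      · push Not at h
        exact ⟨a, ha, mem_of_superset self_mem_nhdsWithin h⟩
    have hIcc : ContinuousWithinAt (fun a => ∫ b in c..a, q b) (Icc a₁ a₂) a :=
      intervalIntegral.continuousWithinAt_primitive (measure_singleton a)
        (hint _ (min_rec' (· ∈ E) hc ha₁) _ (max_rec' (· ∈ E) hc ha₂))
    exact hIcc.mono_of_mem_nhdsWithin (Ici_inter_Iic (a := a₁) (b := a₂) ▸ inter_mem hnhds₁ hnhds₂)
  -- `intervalIntegral.integral_undef`: off `E` the primitive is `0`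
  have hpiece : (fun a => ∫ b in c..a, q b) = E.piecewise (fun a => ∫ b in c..a, q b) 0 := by
    funext a
    by_cases ha : a ∈ E
    · simp [ha]
    · simp [ha, intervalIntegral.integral_undef ha]
  rw [hpiece]
  exact hcont.measurable_piecewise continuousOn_const hE.measurableSet

def cumRate (B : ℝ → ℝ) (x t : ℝ) : ℝ := ∫ s in (0:ℝ)..t, B (x * exp s)

def divisionIntegrand (B : ℝ → ℝ) (φ : ℝ → ℝ → ℝ) (t x τ : ℝ) : ℝ :=
  B (x * exp τ) * exp (-cumRate B x τ) * φ (t - τ) (x * exp τ / 2)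

theorem isMildSol_iff {B f : ℝ → ℝ} {φ : ℝ → ℝ → ℝ} :
    IsMildSol B f φ ↔ ∀ t ≥ 0, ∀ x > 0,
      φ t x = f (x * exp t) * exp (-cumRate B x t)
        + 2 * ∫ τ in (0:ℝ)..t, divisionIntegrand B φ t x τ :=
  Iff.rfl

section Rate

variable {B : ℝ → ℝ} {x : ℝ}

theorem continuous_comp_mul_exp (hB : ContinuousOn B (Ioi 0)) (hx : 0 < x) :
    Continuous fun s => B (x * exp s) :=
  hB.comp_continuous (by fun_prop) fun s => mul_pos hx (exp_pos s)

theorem continuous_cumRate (hB : ContinuousOn B (Ioi 0)) (hx : 0 < x) : Continuous (cumRate B x) :=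
  intervalIntegral.continuous_primitive
    (fun _ _ => (continuous_comp_mul_exp hB hx).intervalIntegrable _ _) 0

theorem cumRate_add (hB : ContinuousOn B (Ioi 0)) (hx : 0 < x) (τ u : ℝ) :
    cumRate B x (τ + u) = cumRate B x τ + cumRate B (x * exp τ) u := by
  have hint := (continuous_comp_mul_exp hB hx).intervalIntegrable (μ := volume)
  have hshift : cumRate B (x * exp τ) u = ∫ s in τ..τ + u, B (x * exp s) := by
    simp only [cumRate, mul_assoc, ← exp_add]
    simpa using intervalIntegral.integral_comp_add_left (fun s => B (x * exp s)) τ (a := 0) (b := u)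
  rw [hshift, cumRate, cumRate,
    intervalIntegral.integral_add_adjacent_intervals (hint _ _) (hint _ _)]

theorem cumRate_nonneg (hB0 : ∀ y > 0, 0 ≤ B y) (hx : 0 < x) {t : ℝ} (ht : 0 ≤ t) :
    0 ≤ cumRate B x t :=
  intervalIntegral.integral_nonneg ht fun s _ => hB0 _ (mul_pos hx (exp_pos s))

end Rate

namespace IsMildSol

variable {B f : ℝ → ℝ} {φ : ℝ → ℝ → ℝ} {x : ℝ}

theorem eq_along_characteristic (h : IsMildSol B f φ) (hB : ContinuousOn B (Ioi 0)) (hx : 0 < x)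
    {τ t : ℝ} (hτt : τ ≤ t) :
    φ (t - τ) (x * exp τ) = f (x * exp t) * exp (cumRate B x τ - cumRate B x t)
      + 2 * exp (cumRate B x τ) * ∫ v in τ..t, divisionIntegrand B φ t x v := by
  have hrate (u : ℝ) : cumRate B (x * exp τ) u = cumRate B x (τ + u) - cumRate B x τ := by
    rw [cumRate_add hB hx]; ring
  have hintegrand (u : ℝ) : divisionIntegrand B φ (t - τ) (x * exp τ) u
      = exp (cumRate B x τ) * divisionIntegrand B φ t x (τ + u) := by
    simp only [divisionIntegrand, hrate, exp_add, neg_sub, exp_sub, exp_neg, mul_assoc x,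
      show t - τ - u = t - (τ + u) by ring]
    ring
  rw [isMildSol_iff.1 h (t - τ) (sub_nonneg.2 hτt) _ (mul_pos hx (exp_pos τ)),
    intervalIntegral.integral_congr fun u _ => hintegrand u, intervalIntegral.integral_const_mul,
    intervalIntegral.integral_comp_add_left, hrate, mul_assoc x, ← exp_add]
  simp only [add_zero, add_sub_cancel, neg_sub]
  ring

theorem aestronglyMeasurable_along_characteristic (h : IsMildSol B f φ)
    (hB : ContinuousOn B (Ioi 0)) (hx : 0 < x) (t : ℝ) :
    AEStronglyMeasurable (fun τ => φ (t - τ) (x * exp τ)) (volume.restrict (Iic t)) := by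
  have hprim : Measurable fun τ => ∫ v in τ..t, divisionIntegrand B φ t x v := by
    simp only [intervalIntegral.integral_symm t]
    exact (measurable_primitive _ t).neg
  have hrate := (continuous_cumRate hB hx).measurable
  have hrhs : Measurable fun τ => f (x * exp t) * exp (cumRate B x τ - cumRate B x t)
      + 2 * exp (cumRate B x τ) * ∫ v in τ..t, divisionIntegrand B φ t x v := by
    fun_prop
  refine hrhs.aestronglyMeasurable.congr ?_
  filter_upwards [ae_restrict_mem measurableSet_Iic] with τ hτ
  exact (h.eq_along_characteristic hB hx hτ).symm

theorem intervalIntegrable_divisionIntegrand (h : IsMildSol B f φ) (hB : ContinuousOn B (Ioi 0))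
    (hφ : LocBdd2 φ) (hx : 0 < x) {t : ℝ} (ht : 0 ≤ t) :
    IntervalIntegrable (divisionIntegrand B φ t x) volume 0 t := by
  set ρ : ℝ → ℝ := fun τ => B (x * exp τ) * exp (-cumRate B x τ)
  have hρ : Continuous ρ :=
    (continuous_comp_mul_exp hB hx).mul (continuous_cumRate hB hx).neg.rexp
  have hsplit : divisionIntegrand B φ t x = fun τ => ρ τ * φ (t - τ) (x / 2 * exp τ) := by
    funext τ
    simp only [divisionIntegrand, ρ, div_mul_eq_mul_div]
  obtain ⟨K, hK⟩ := (isCompact_Icc (a := 0) (b := t)).exists_bound_of_continuousOn hρ.continuousOn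
  have hr : 0 < max t (x * exp t) := lt_max_of_lt_right (by positivity)
  obtain ⟨M, hM⟩ := hφ _ hr
  rw [intervalIntegrable_iff_integrableOn_Icc_of_le ht, hsplit]
  refine Integrable.mono' (integrableOn_const (C := K * M) measure_Icc_lt_top.ne)
    (hρ.aestronglyMeasurable.mul ((h.aestronglyMeasurable_along_characteristic hB (half_pos hx) t
      ).mono_measure (Measure.restrict_mono Icc_subset_Iic_self le_rfl))) ?_
  filter_upwards [ae_restrict_mem measurableSet_Icc] with τ ⟨hτ0, hτt⟩
  have hpt : x / 2 * exp τ ≤ max t (x * exp t) := calc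
    x / 2 * exp τ ≤ x * exp t := by gcongr; linarith
    _ ≤ _ := le_max_right _ _
  rw [norm_mul]
  exact mul_le_mul (hK τ ⟨hτ0, hτt⟩)
    (hM _ _ (by linarith) ((sub_le_self t hτ0).trans (le_max_left _ _)) (by positivity) hpt)
    (norm_nonneg _) ((norm_nonneg _).trans (hK 0 ⟨le_rfl, ht⟩))

theorem shift (h : IsMildSol B f φ) (hB : ContinuousOn B (Ioi 0)) (hφ : LocBdd2 φ) {s : ℝ}
    (hs : 0 ≤ s) : IsMildSol B (fun x => φ s x) (fun t x => φ (t + s) x) := by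
  refine isMildSol_iff.2 fun t ht x hx => ?_
  have hint := h.intervalIntegrable_divisionIntegrand hB hφ hx (add_nonneg ht hs)
  have hmem : t ∈ uIcc 0 (t + s) := mem_uIcc_of_le ht (le_add_of_nonneg_right hs : t ≤ t + s)
  have hsplit := intervalIntegral.integral_add_adjacent_intervals
    (hint.mono_set (uIcc_subset_uIcc left_mem_uIcc hmem))
    (hint.mono_set (uIcc_subset_uIcc hmem right_mem_uIcc))
  have hrestart := h.eq_along_characteristic hB hx (le_add_of_nonneg_right hs : t ≤ t + s)
  rw [add_sub_cancel_left] at hrestart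
  have hshifted : ∫ τ in (0:ℝ)..t, divisionIntegrand B (fun t x => φ (t + s) x) t x τ
      = ∫ τ in (0:ℝ)..t, divisionIntegrand B φ (t + s) x τ := by
    simp only [divisionIntegrand, sub_add_eq_add_sub]
  have hcancel : exp (cumRate B x t) * exp (-cumRate B x t) = 1 := by
    rw [← exp_add, add_neg_cancel, exp_zero]
  show φ (t + s) x = _
  rw [hshifted, hrestart, isMildSol_iff.1 h (t + s) (add_nonneg ht hs) x hx, ← hsplit,
    sub_eq_add_neg (cumRate B x t), exp_add (cumRate B x t)]
  linear_combination (-(f (x * exp (t + s)) * exp (-cumRate B x (t + s)))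
    - 2 * ∫ v in t..t + s, divisionIntegrand B φ (t + s) x v) * hcancel

end IsMildSol

theorem Bhyp.exists_bound_s3 {B : ℝ → ℝ} (hB : Bhyp B) (R : ℝ) :
    ∃ C, 0 ≤ C ∧ ∀ y, 0 < y → y ≤ R → B y ≤ C := by
  obtain ⟨hcont, -, ε, hε, C₀, hC₀⟩ := hB
  obtain ⟨C₁, hC₁⟩ := (isCompact_Icc (a := ε / 2) (b := R)).exists_bound_of_continuousOn
    (hcont.mono fun y hy => (half_pos hε).trans_le hy.1)
  refine ⟨max (max C₀ C₁) 0, le_max_right _ _, fun y hy hyR => ?_⟩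
  rcases lt_or_ge y ε with hyε | hyε
  · exact (hC₀ y hy hyε).trans ((le_max_left _ _).trans (le_max_left _ _))
  · calc B y ≤ ‖B y‖ := le_norm_self _
      _ ≤ C₁ := hC₁ y ⟨by linarith, hyR⟩
      _ ≤ _ := (le_max_right _ _).trans (le_max_left _ _)

theorem LocBdd2.shift {φ : ℝ → ℝ → ℝ} (hφ : LocBdd2 φ) {s : ℝ} (hs : 0 ≤ s) :
    LocBdd2 (fun t x => φ (t + s) x) := by
  intro r hr
  obtain ⟨C, hC⟩ := hφ (r + s) (by linarith)
  exact ⟨C, fun t x ht htr hx hxr => hC _ _ (by linarith) (by linarith) hx (by linarith)⟩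

theorem LocBdd2.sub {φ ψ : ℝ → ℝ → ℝ} (hφ : LocBdd2 φ) (hψ : LocBdd2 ψ) :
    LocBdd2 (fun t x => φ t x - ψ t x) := by
  intro r hr
  obtain ⟨C, hC⟩ := hφ r hr
  obtain ⟨D, hD⟩ := hψ r hr
  exact ⟨C + D, fun t x ht htr hx hxr =>
    (abs_sub _ _).trans (add_le_add (hC t x ht htr hx hxr) (hD t x ht htr hx hxr))⟩

theorem mul_integral_mul_sub_pow_div_factorial (K t : ℝ) (n : ℕ) :
    K * ∫ τ in (0:ℝ)..t, (K * (t - τ)) ^ n / n.factorial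
      = (K * t) ^ (n + 1) / (n + 1).factorial := by
  simp only [mul_pow, mul_div_assoc, intervalIntegral.integral_const_mul,
    intervalIntegral.integral_div]
  rw [intervalIntegral.integral_comp_sub_left (fun τ => τ ^ n), integral_pow, Nat.factorial_succ]
  push_cast
  field_simp
  ring

namespace IsMildSol

variable {B f : ℝ → ℝ} {φ ψ Δ : ℝ → ℝ → ℝ}

theorem sub (hφ : IsMildSol B f φ) (hψ : IsMildSol B f ψ) (hB : ContinuousOn B (Ioi 0))
    (hφb : LocBdd2 φ) (hψb : LocBdd2 ψ) : IsMildSol B 0 (fun t x => φ t x - ψ t x) := by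
  refine isMildSol_iff.2 fun t ht x hx => ?_
  have hdiff : divisionIntegrand B (fun t x => φ t x - ψ t x) t x
      = fun τ => divisionIntegrand B φ t x τ - divisionIntegrand B ψ t x τ :=
    funext fun τ => mul_sub _ _ _
  rw [hdiff, intervalIntegral.integral_sub (hφ.intervalIntegrable_divisionIntegrand hB hφb hx ht)
    (hψ.intervalIntegrable_divisionIntegrand hB hψb hx ht)]
  show φ t x - ψ t x = _
  rw [isMildSol_iff.1 hφ t ht x hx, isMildSol_iff.1 hψ t ht x hx, Pi.zero_apply]
  ring

theorem abs_le_mul_pow_div_factorial (h : IsMildSol B 0 Δ) (hB0 : ∀ y > 0, 0 ≤ B y)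
    {C M R : ℝ} (hC0 : 0 ≤ C) (hC : ∀ y, 0 < y → y ≤ R → B y ≤ C)
    (hM : ∀ t x, 0 ≤ t → t ≤ R → 0 < x → x ≤ R → |Δ t x| ≤ M) (n : ℕ) :
    ∀ t x, 0 ≤ t → t ≤ R → 0 < x → x * exp t ≤ R →
      |Δ t x| ≤ M * (2 * C * t) ^ n / n.factorial := by
  induction n with
  | zero =>
    intro t x ht htR hx hxR
    simpa using hM t x ht htR hx ((le_mul_of_one_le_right hx.le (one_le_exp ht)).trans hxR)
  | succ n ih =>
    intro t x ht htR hx hxR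
    have hpt : ∀ τ ∈ Ioc 0 t, ‖divisionIntegrand B Δ t x τ‖
        ≤ C * (M * (2 * C * (t - τ)) ^ n / n.factorial) := by
      rintro τ ⟨hτ0, hτt⟩
      have hxτ : 0 < x * exp τ := mul_pos hx (exp_pos τ)
      have hrate : B (x * exp τ) * exp (-cumRate B x τ) ≤ C := calc
        _ ≤ B (x * exp τ) * 1 := by
          gcongr
          · exact hB0 _ hxτ
          · exact exp_le_one_iff.2 (neg_nonpos.2 (cumRate_nonneg hB0 hx hτ0.le))
        _ ≤ C := by
          rw [mul_one]
          exact hC _ hxτ ((mul_le_mul_of_nonneg_left (exp_le_exp.2 hτt) hx.le).trans hxR)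
      have hchar : x * exp τ / 2 * exp (t - τ) ≤ R := by
        rw [div_mul_eq_mul_div, mul_assoc, ← exp_add, add_sub_cancel]
        linarith [mul_pos hx (exp_pos t)]
      rw [divisionIntegrand, norm_mul, Real.norm_of_nonneg (by have := hB0 _ hxτ; positivity)]
      exact mul_le_mul hrate (ih _ _ (by linarith) (by linarith) (half_pos hxτ) hchar)
        (norm_nonneg _) hC0
    have hcont : Continuous fun τ => C * (M * (2 * C * (t - τ)) ^ n / n.factorial) := by fun_prop
    have hbound := intervalIntegral.norm_integral_le_of_norm_le ht (ae_of_all volume hpt)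
      (hcont.intervalIntegrable 0 t)
    calc |Δ t x| = 2 * ‖∫ τ in (0:ℝ)..t, divisionIntegrand B Δ t x τ‖ := by
          rw [isMildSol_iff.1 h t ht x hx, Pi.zero_apply, zero_mul, zero_add, Real.norm_eq_abs,
            abs_mul, abs_two]
      _ ≤ 2 * ∫ τ in (0:ℝ)..t, C * (M * (2 * C * (t - τ)) ^ n / n.factorial) := by gcongr
      _ = M * (2 * C * t) ^ (n + 1) / (n + 1).factorial := by
        have hpull (τ : ℝ) : C * (M * (2 * C * (t - τ)) ^ n / n.factorial)
            = C * M * ((2 * C * (t - τ)) ^ n / n.factorial) := by ring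
        rw [mul_div_assoc, ← mul_integral_mul_sub_pow_div_factorial]
        simp only [hpull, intervalIntegral.integral_const_mul]
        ring

theorem eq_zero (h : IsMildSol B 0 Δ) (hB : Bhyp B) (hΔ : LocBdd2 Δ) {t x : ℝ}
    (ht : 0 ≤ t) (hx : 0 < x) : Δ t x = 0 := by
  set R := max t (x * exp t)
  have hR : 0 < R := lt_max_of_lt_right (by positivity)
  obtain ⟨C, hC0, hC⟩ := hB.exists_bound_s3 R
  obtain ⟨M, hM⟩ := hΔ R hR
  have hbound (n : ℕ) : |Δ t x| ≤ M * ((2 * C * t) ^ n / n.factorial) := by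
    rw [← mul_div_assoc]
    exact h.abs_le_mul_pow_div_factorial hB.2.1 hC0 hC hM n t x ht (le_max_left _ _) hx
      (le_max_right _ _)
  have hlim := (FloorSemiring.tendsto_pow_div_factorial_atTop (2 * C * t)).const_mul M
  rw [mul_zero] at hlim
  exact abs_nonpos_iff.1 (ge_of_tendsto' hlim hbound)

theorem unique (hφ : IsMildSol B f φ) (hψ : IsMildSol B f ψ) (hB : Bhyp B)
    (hφb : LocBdd2 φ) (hψb : LocBdd2 ψ) {t x : ℝ} (ht : 0 ≤ t) (hx : 0 < x) :
    φ t x = ψ t x :=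
  sub_eq_zero.1 ((hφ.sub hψ hB.1 hφb hψb).eq_zero hB (hφb.sub hψb) ht hx)

end IsMildSol

theorem stmt3_general (B : ℝ → ℝ) (hB : Bhyp B) (f : ℝ → ℝ)
    (s t : ℝ) (hs : 0 ≤ s) (ht : 0 ≤ t)
    (φ ψ : ℝ → ℝ → ℝ) (hφ : LocBdd2 φ) (hφsol : IsMildSol B f φ)
    (hψ : LocBdd2 ψ) (hψsol : IsMildSol B (fun x => φ s x) ψ) :
    ∀ x > 0, φ (t + s) x = ψ t x := fun _ hx =>
  (hφsol.shift hB.1 hφ hs).unique hψsol hB (hφ.shift hs) hψ ht hx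

/-- Semigroup property: the unique locally bounded mild solution with datum `f` evaluated at time
`t + s` equals the unique locally bounded mild solution with datum `M_s f` evaluated at time `t`. -/
theorem stmt3 (B : ℝ → ℝ) (hB : Bhyp B) (f : ℝ → ℝ) (hf : LocBddOn f)
    (s t : ℝ) (hs : 0 ≤ s) (ht : 0 ≤ t)
    (φ ψ : ℝ → ℝ → ℝ) (hφ : LocBdd2 φ) (hφsol : IsMildSol B f φ)
    (hψ : LocBdd2 ψ) (hψsol : IsMildSol B (fun x => φ s x) ψ) :
    ∀ x > 0, φ (t + s) x = ψ t x :=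
  stmt3_general B hB f s t hs ht φ ψ hφ hφsol hψ hψsol
end
end

section
/- Assume B : (0,∞) → [0,∞) is continuous and bounded on some neighborhood of 0 and satisfies (A2), and let U be a continuously differentiable Perron eigenfunction. Then for every m ∈ ℤ \ {0}, ∫₀^∞ x·exp((2imπ/log 2) log x) U(x) dx = 0; equivalently, ν_k(φ_l) = 1 if k = l and ν_k(φ_l) = 0 if k ≠ l, for all k, l ∈ ℤ. -/
/-!
For `x > 0`, `φ_k(x) = x ^ λ_k` with `2 ^ λ_k = 2`, so `φ_k(2x) = 2 φ_k(x)` and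
`x φ_k'(x) = λ_k φ_k(x)`. Testing the eigenvalue equation against `φ_k`, the substitution `y = 2x`
makes the gain term `4 B(2x) U(2x)` cancel the loss term `B U`, while an integration by parts
(boundary terms vanish by the moment bounds on `U`) turns `∫ (xU)' φ_k` into `-λ_k ∫ U φ_k`.
Hence `(λ_k - 1) ∫ U φ_k = 0`, and `λ_k ≠ 1` for `k ≠ 0`. Biorthogonality follows from
`U_k φ_l = U φ_{l-k}` and the normalisation `∫ x U = 1`.
-/

open MeasureTheory Real Set Filter Topology

noncomputable section

/-- Assumption (A2) on the division rate: local integrability, support `[b,∞)`,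
power-law bound near `0` and two-sided power-law bounds at infinity. -/
def HypA2 (B : ℝ → ℝ) : Prop :=
  (∀ a b : ℝ, 0 < a → IntegrableOn B (Icc a b)) ∧
  (∃ b ≥ (0:ℝ), closure {x : ℝ | 0 < x ∧ B x ≠ 0} = Ici b) ∧
  (∃ b₀ > (0:ℝ), ∃ γ₀ > (0:ℝ), ∃ K₀ > (0:ℝ), ∀ x, 0 < x → x < b₀ → B x ≤ K₀ * x ^ γ₀) ∧
  (∃ b₁ > (0:ℝ), ∃ γ₁ > (0:ℝ), ∃ γ₂ > (0:ℝ), ∃ K₁ > (0:ℝ), ∃ K₂ > (0:ℝ),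
    ∀ x, b₁ < x → K₁ * x ^ γ₁ ≤ B x ∧ B x ≤ K₂ * x ^ γ₂)

/-- `U` is a continuously differentiable Perron eigenfunction (with derivative `U'`):
nonnegative, solves `(xU)' + (B+1)U = 4B(2x)U(2x)`, is normalized by `∫ x U = 1`,
and `x^r U` is bounded and integrable on `(0,∞)` for every real `r`. -/
def Perron (B U U' : ℝ → ℝ) : Prop :=
  (∀ x > 0, 0 ≤ U x) ∧
  (∀ x > 0, HasDerivAt U (U' x) x) ∧
  ContinuousOn U' (Ioi 0) ∧
  (∀ x > 0, (U x + x * U' x) + (B x + 1) * U x = 4 * B (2 * x) * U (2 * x)) ∧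
  (∫ x in Ioi (0:ℝ), x * U x) = 1 ∧
  (∀ r : ℝ, (∃ C, ∀ x > 0, x ^ r * U x ≤ C) ∧ IntegrableOn (fun x => x ^ r * U x) (Ioi 0))

/-- The boundary eigenvalue `λ_k = 1 + 2ikπ/log 2`. -/
def lambdak (k : ℤ) : ℂ :=
  1 + Complex.I * ((2 * (k : ℝ) * Real.pi / Real.log 2 : ℝ) : ℂ)

/-- The adjoint boundary eigenfunction `φ_k(x) = x · exp((2ikπ/log 2) log x)`. -/
def phik (k : ℤ) (x : ℝ) : ℂ :=
  (x : ℂ) * Complex.exp (Complex.I * ((2 * (k : ℝ) * Real.pi / Real.log 2 : ℝ) : ℂ)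
      * (Real.log x : ℂ))

/-- The boundary eigenfunction `U_k(x) = exp(-(2ikπ/log 2) log x) U(x)`. -/
def Uk (U : ℝ → ℝ) (k : ℤ) (x : ℝ) : ℂ :=
  Complex.exp (-(Complex.I * ((2 * (k : ℝ) * Real.pi / Real.log 2 : ℝ) : ℂ))
      * (Real.log x : ℂ)) * (U x : ℂ)

/-- The linear form `ν_k(f) = ∫₀^∞ U_k(x) f(x) dx` (complex-valued `f`). -/
def nuk (U : ℝ → ℝ) (k : ℤ) (f : ℝ → ℂ) : ℂ :=
  ∫ x in Ioi (0:ℝ), Uk U k x * f x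

lemma phik_zero (x : ℝ) : phik 0 x = x := by
  simp [phik]

lemma norm_phik (k : ℤ) (x : ℝ) : ‖phik k x‖ = |x| := by
  rw [phik, norm_mul, Complex.norm_real, Real.norm_eq_abs, mul_assoc, ← Complex.ofReal_mul,
    mul_comm Complex.I, Complex.norm_exp_ofReal_mul_I, mul_one]

lemma lambdak_ne_one {k : ℤ} (hk : k ≠ 0) : lambdak k ≠ 1 := by
  have hθ : 2 * (k : ℝ) * π / Real.log 2 ≠ 0 := by
    have := Real.log_pos one_lt_two
    positivity
  rw [lambdak, Ne, add_eq_left, mul_eq_zero, not_or]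
  exact ⟨Complex.I_ne_zero, Complex.ofReal_ne_zero.mpr hθ⟩

lemma phik_two_mul (k : ℤ) {x : ℝ} (hx : 0 < x) : phik k (2 * x) = 2 * phik k x := by
  have hlog2 : (Real.log 2 : ℂ) ≠ 0 := by exact_mod_cast (Real.log_pos one_lt_two).ne'
  have h2 : Complex.exp (Complex.I * ((2 * (k : ℝ) * π / Real.log 2 : ℝ) : ℂ)
      * (Real.log 2 : ℂ)) = 1 := by
    rw [← Complex.exp_int_mul_two_pi_mul_I k]
    congr 1
    push_cast
    field_simp
  rw [phik, phik, Real.log_mul two_ne_zero hx.ne', Complex.ofReal_add, mul_add, Complex.exp_add,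
    h2]
  push_cast
  ring

lemma hasDerivAt_phik (k : ℤ) {x : ℝ} (hx : 0 < x) :
    HasDerivAt (phik k) (lambdak k * phik k x / x) x := by
  have hlog : HasDerivAt (fun y : ℝ => (Real.log y : ℂ)) ((x⁻¹ : ℝ) : ℂ) x :=
    (Real.hasDerivAt_log hx.ne').ofReal_comp
  refine ((hasDerivAt_id x).ofReal_comp.mul ((hlog.const_mul _).cexp)).congr_deriv ?_
  have hx' : (x : ℂ) ≠ 0 := by exact_mod_cast hx.ne'
  simp only [phik, lambdak, id]
  push_cast
  field_simp

lemma continuousOn_phik (k : ℤ) : ContinuousOn (phik k) (Ioi 0) :=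
  fun _ hx => (hasDerivAt_phik k hx).continuousAt.continuousWithinAt

lemma Uk_mul_phik (U : ℝ → ℝ) (k l : ℤ) (x : ℝ) : Uk U k x * phik l x = phik (l - k) x * U x := by
  have hθ : Complex.I * ((2 * ((l - k : ℤ) : ℝ) * π / Real.log 2 : ℝ) : ℂ) * (Real.log x : ℂ)
      = -(Complex.I * ((2 * (k : ℝ) * π / Real.log 2 : ℝ) : ℂ)) * (Real.log x : ℂ)
        + Complex.I * ((2 * (l : ℝ) * π / Real.log 2 : ℝ) : ℂ) * (Real.log x : ℂ) := by
    push_cast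
    ring
  rw [Uk, phik, phik, hθ, Complex.exp_add]
  ring

lemma nuk_phik (U : ℝ → ℝ) (k l : ℤ) :
    nuk U k (phik l) = ∫ x in Ioi (0:ℝ), phik (l - k) x * U x := by
  simp only [nuk, Uk_mul_phik]

lemma Bhyp.exists_le_mul_one_add_rpow {B : ℝ → ℝ} (hB : Bhyp B) (hB2 : HypA2 B) :
    ∃ C γ : ℝ, ∀ x > 0, B x ≤ C * (1 + x ^ γ) := by
  obtain ⟨hBc, -, ε, hε, Cε, hBε⟩ := hB
  obtain ⟨-, -, -, b₁, -, _, -, γ, -, _, -, K, hK, hBpoly⟩ := hB2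
  obtain ⟨C₁, hC₁⟩ := isCompact_Icc.exists_bound_of_continuousOn
    (hBc.mono fun x (hx : x ∈ Icc ε b₁) => hε.trans_le hx.1)
  set C := max (max Cε C₁) K
  refine ⟨C, γ, fun x hx => ?_⟩
  have hxγ : 0 ≤ x ^ γ := Real.rpow_nonneg hx.le γ
  have hC : 0 ≤ C := hK.le.trans (le_max_right _ _)
  have hC_le : C ≤ C * (1 + x ^ γ) := by nlinarith
  rcases lt_or_ge x ε with hxε | hεx
  · exact (hBε x hx hxε).trans ((le_max_left _ _).trans (le_max_left _ _)) |>.trans hC_le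
  rcases le_or_gt x b₁ with hxb | hbx
  · exact (le_abs_self _).trans (hC₁ x ⟨hεx, hxb⟩) |>.trans
      ((le_max_right _ _).trans (le_max_left _ _)) |>.trans hC_le
  calc B x ≤ K * x ^ γ := (hBpoly x hbx).2
    _ ≤ C * x ^ γ := mul_le_mul_of_nonneg_right (le_max_right _ _) hxγ
    _ ≤ C * (1 + x ^ γ) := by nlinarith

lemma tendsto_sq_mul_nhdsGT_zero {U : ℝ → ℝ} {C : ℝ} (hU0 : ∀ x > 0, 0 ≤ U x)
    (hC : ∀ x > 0, U x ≤ C) : Tendsto (fun x => x ^ 2 * U x) (𝓝[>] 0) (𝓝 0) := by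
  have hlim : Tendsto (fun x : ℝ => x ^ 2 * C) (𝓝[>] 0) (𝓝 0) :=
    (Continuous.tendsto' (by fun_prop) 0 0 (by simp)).mono_left nhdsWithin_le_nhds
  refine squeeze_zero' ?_ ?_ hlim <;> filter_upwards [self_mem_nhdsWithin] with x (hx : 0 < x)
  · exact mul_nonneg (sq_nonneg x) (hU0 x hx)
  · exact mul_le_mul_of_nonneg_left (hC x hx) (sq_nonneg x)

lemma tendsto_sq_mul_atTop {U : ℝ → ℝ} {C : ℝ} (hU0 : ∀ x > 0, 0 ≤ U x)
    (hC : ∀ x > 0, x ^ 3 * U x ≤ C) : Tendsto (fun x => x ^ 2 * U x) atTop (𝓝 0) := by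
  have hlim : Tendsto (fun x : ℝ => C * x⁻¹) atTop (𝓝 0) := by
    simpa using tendsto_inv_atTop_zero.const_mul C
  refine squeeze_zero' ?_ ?_ hlim <;> filter_upwards [eventually_gt_atTop 0] with x hx
  · exact mul_nonneg (sq_nonneg x) (hU0 x hx)
  · calc x ^ 2 * U x = x ^ 3 * U x * x⁻¹ := by field_simp
      _ ≤ C * x⁻¹ := mul_le_mul_of_nonneg_right (hC x hx) (inv_nonneg.mpr hx.le)

lemma integral_mul_four_mul_comp_two_mul {g φ : ℝ → ℂ} (hφ : ∀ x > 0, φ (2 * x) = 2 * φ x) :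
    ∫ x in Ioi (0:ℝ), φ x * (4 * g (2 * x)) = ∫ x in Ioi (0:ℝ), φ x * g x := by
  have h : ∀ x ∈ Ioi (0:ℝ), φ x * (4 * g (2 * x)) = (2:ℝ) • (φ (2 * x) * g (2 * x)) := by
    intro x hx
    rw [hφ x hx, Complex.real_smul]
    push_cast
    ring
  rw [setIntegral_congr_fun measurableSet_Ioi h, integral_smul,
    integral_comp_mul_left_Ioi (fun y => φ y * g y) 0 two_pos, smul_smul, mul_zero]
  norm_num

lemma integrableOn_mul_four_mul_comp_two_mul {g φ : ℝ → ℂ} (hφ : ∀ x > 0, φ (2 * x) = 2 * φ x)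
    (hg : IntegrableOn (fun x => φ x * g x) (Ioi 0)) :
    IntegrableOn (fun x => φ x * (4 * g (2 * x))) (Ioi 0) := by
  have h2 : IntegrableOn (fun x => φ (2 * x) * g (2 * x)) (Ioi 0) :=
    (integrableOn_Ioi_comp_mul_left_iff (fun y => φ y * g y) 0 two_pos).mpr (by simpa using hg)
  refine IntegrableOn.congr_fun (h2.const_mul 2) (fun x hx => ?_) measurableSet_Ioi
  rw [hφ x hx]
  ring

section Perron

variable {B U U' : ℝ → ℝ}

lemma Perron.integrableOn_rpow_mul (hU : Perron B U U') (r : ℝ) :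
    IntegrableOn (fun x => x ^ r * U x) (Ioi 0) :=
  (hU.2.2.2.2.2 r).2

lemma Perron.exists_rpow_mul_le (hU : Perron B U U') (r : ℝ) : ∃ C, ∀ x > 0, x ^ r * U x ≤ C :=
  (hU.2.2.2.2.2 r).1

lemma Perron.continuousOn (hU : Perron B U U') : ContinuousOn U (Ioi 0) :=
  fun x hx => (hU.2.1 x hx).continuousAt.continuousWithinAt

lemma Perron.integrableOn_phik_mul (hU : Perron B U U') (k : ℤ) {g : ℝ → ℝ}
    (hg : ContinuousOn g (Ioi 0)) {C γ : ℝ} (hgC : ∀ x > 0, |g x| ≤ C * (1 + x ^ γ)) :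
    IntegrableOn (fun x => phik k x * ((g x : ℂ) * U x)) (Ioi 0) := by
  have hcont : ContinuousOn (fun x => phik k x * ((g x : ℂ) * U x)) (Ioi 0) :=
    (continuousOn_phik k).mul
      ((Complex.continuous_ofReal.comp_continuousOn hg).mul
        (Complex.continuous_ofReal.comp_continuousOn hU.continuousOn))
  refine Integrable.mono'
    (((hU.integrableOn_rpow_mul 1).add (hU.integrableOn_rpow_mul (1 + γ))).const_mul C)
    (hcont.aestronglyMeasurable measurableSet_Ioi) ?_
  filter_upwards [ae_restrict_mem measurableSet_Ioi] with x (hx : 0 < x)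
  have hUx := hU.1 x hx
  rw [norm_mul, norm_mul, norm_phik, Complex.norm_real, Complex.norm_real, Real.norm_eq_abs,
    Real.norm_eq_abs, abs_of_pos hx, abs_of_nonneg hUx, Pi.add_apply, Real.rpow_add hx,
    Real.rpow_one]
  calc x * (|g x| * U x) ≤ x * (C * (1 + x ^ γ) * U x) := by gcongr; exact hgC x hx
    _ = C * (x * U x + x * x ^ γ * U x) := by ring

lemma Perron.integrableOn_phik_mul_self (hU : Perron B U U') (k : ℤ) :
    IntegrableOn (fun x => phik k x * U x) (Ioi 0) := by
  simpa using hU.integrableOn_phik_mul k (g := fun _ => 1) continuousOn_const (C := 1) (γ := 0)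
    (fun x _ => by norm_num)

lemma Perron.integrableOn_phik_mul_B_mul (hB : Bhyp B) (hB2 : HypA2 B) (hU : Perron B U U')
    (k : ℤ) : IntegrableOn (fun x => phik k x * ((B x : ℂ) * U x)) (Ioi 0) := by
  obtain ⟨C, γ, hBC⟩ := hB.exists_le_mul_one_add_rpow hB2
  exact hU.integrableOn_phik_mul k hB.1 fun x hx =>
    (abs_of_nonneg (hB.2.1 x hx)).trans_le (hBC x hx)

lemma Perron.deriv_mul_phik_eq (hU : Perron B U U') (k : ℤ) {x : ℝ} (hx : 0 < x) :
    ((U x + x * U' x : ℝ) : ℂ) * phik k x = phik k x * (4 * ((B (2 * x) : ℂ) * U (2 * x)))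
      - phik k x * ((B x : ℂ) * U x) - phik k x * U x := by
  have h := congrArg (fun r : ℝ => (r : ℂ)) (hU.2.2.2.1 x hx)
  push_cast at h ⊢
  linear_combination phik k x * h

lemma Perron.integrableOn_deriv_mul_phik (hB : Bhyp B) (hB2 : HypA2 B) (hU : Perron B U U')
    (k : ℤ) : IntegrableOn (fun x => ((U x + x * U' x : ℝ) : ℂ) * phik k x) (Ioi 0) := by
  have hBU := hU.integrableOn_phik_mul_B_mul hB hB2 k
  have hgain := integrableOn_mul_four_mul_comp_two_mul (fun x hx => phik_two_mul k hx) hBU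
  exact IntegrableOn.congr_fun ((hgain.sub hBU).sub (hU.integrableOn_phik_mul_self k))
    (fun x hx => (hU.deriv_mul_phik_eq k hx).symm) measurableSet_Ioi

lemma Perron.integral_deriv_mul_phik (hB : Bhyp B) (hB2 : HypA2 B) (hU : Perron B U U')
    (k : ℤ) : ∫ x in Ioi (0:ℝ), ((U x + x * U' x : ℝ) : ℂ) * phik k x
      = -∫ x in Ioi (0:ℝ), phik k x * U x := by
  have hBU := hU.integrableOn_phik_mul_B_mul hB hB2 k
  have hgain := integrableOn_mul_four_mul_comp_two_mul (fun x hx => phik_two_mul k hx) hBU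
  rw [setIntegral_congr_fun measurableSet_Ioi fun x hx => hU.deriv_mul_phik_eq k hx,
    integral_sub (hgain.sub' hBU) (hU.integrableOn_phik_mul_self k), integral_sub hgain hBU,
    integral_mul_four_mul_comp_two_mul (g := fun y => (B y : ℂ) * U y) fun x hx =>
      phik_two_mul k hx]
  ring

lemma Perron.tendsto_mul_phik (hU : Perron B U U') (k : ℤ) {l : Filter ℝ} (hl : ∀ᶠ x in l, 0 < x)
    (h : Tendsto (fun x => x ^ 2 * U x) l (𝓝 0)) :
    Tendsto (fun x => ((x * U x : ℝ) : ℂ) * phik k x) l (𝓝 0) := by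
  refine tendsto_zero_iff_norm_tendsto_zero.mpr (h.congr' ?_)
  filter_upwards [hl] with x hx
  rw [norm_mul, norm_phik, Complex.norm_real, Real.norm_eq_abs, abs_of_pos hx,
    abs_of_nonneg (mul_nonneg hx.le (hU.1 x hx))]
  ring

lemma Perron.lambdak_mul_integral_phik_mul (hU : Perron B U U') (k : ℤ)
    (hint : IntegrableOn (fun x => ((U x + x * U' x : ℝ) : ℂ) * phik k x) (Ioi 0)) :
    lambdak k * ∫ x in Ioi (0:ℝ), phik k x * U x
      = -∫ x in Ioi (0:ℝ), ((U x + x * U' x : ℝ) : ℂ) * phik k x := by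
  obtain ⟨C₀, hC₀⟩ := hU.exists_rpow_mul_le 0
  obtain ⟨C₃, hC₃⟩ := hU.exists_rpow_mul_le 3
  have hu : ∀ x ∈ Ioi (0:ℝ),
      HasDerivAt (fun y => ((y * U y : ℝ) : ℂ)) ((U x + x * U' x : ℝ) : ℂ) x := fun x hx => by
    simpa using ((hasDerivAt_id x).mul (hU.2.1 x hx)).ofReal_comp
  have huv' : ∀ x ∈ Ioi (0:ℝ),
      ((x * U x : ℝ) : ℂ) * (lambdak k * phik k x / x) = lambdak k * (phik k x * U x) := by
    intro x (hx : 0 < x)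
    have hx' : (x : ℂ) ≠ 0 := by exact_mod_cast hx.ne'
    push_cast
    field_simp
  have hIBP := integral_Ioi_mul_deriv_eq_deriv_mul hu (fun x hx => hasDerivAt_phik k hx)
    (IntegrableOn.congr_fun ((hU.integrableOn_phik_mul_self k).const_mul (lambdak k))
      (fun x hx => (huv' x hx).symm) measurableSet_Ioi) hint
    (hU.tendsto_mul_phik k self_mem_nhdsWithin
      (tendsto_sq_mul_nhdsGT_zero hU.1 fun x hx => by simpa using hC₀ x hx))
    (hU.tendsto_mul_phik k (eventually_gt_atTop 0)
      (tendsto_sq_mul_atTop hU.1 fun x hx => by exact_mod_cast hC₃ x hx))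
  rw [setIntegral_congr_fun measurableSet_Ioi huv', integral_const_mul] at hIBP
  simpa using hIBP

lemma Perron.lambdak_sub_one_mul_integral_phik_mul (hB : Bhyp B) (hB2 : HypA2 B)
    (hU : Perron B U U') (k : ℤ) :
    (lambdak k - 1) * ∫ x in Ioi (0:ℝ), phik k x * U x = 0 := by
  have h := hU.lambdak_mul_integral_phik_mul k (hU.integrableOn_deriv_mul_phik hB hB2 k)
  rw [hU.integral_deriv_mul_phik hB hB2 k, neg_neg] at h
  rw [sub_mul, h, one_mul, sub_self]

end Perron

/-- Biorthogonality: `∫₀^∞ x e^{(2imπ/log 2) log x} U(x) dx = 0` for `m ≠ 0`; equivalently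
`ν_k(φ_l) = δ_{kl}`. -/
theorem stmt11 (B : ℝ → ℝ) (hB : Bhyp B) (hB2 : HypA2 B)
    (U U' : ℝ → ℝ) (hU : Perron B U U') :
    (∀ m : ℤ, m ≠ 0 → (∫ x in Ioi (0:ℝ), phik m x * (U x : ℂ)) = 0) ∧
    (∀ k l : ℤ, nuk U k (phik l) = if k = l then 1 else 0) := by
  have horth : ∀ m : ℤ, m ≠ 0 → ∫ x in Ioi (0:ℝ), phik m x * (U x : ℂ) = 0 := fun m hm =>
    (mul_eq_zero.mp (hU.lambdak_sub_one_mul_integral_phik_mul hB hB2 m)).resolve_left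
      (sub_ne_zero.mpr (lambdak_ne_one hm))
  refine ⟨horth, fun k l => ?_⟩
  rw [nuk_phik]
  split_ifs with hkl
  · subst hkl
    simp only [sub_self, phik_zero]
    exact_mod_cast (integral_ofReal (𝕜 := ℂ)).trans (congrArg _ hU.2.2.2.2.1)
  · exact horth (l - k) (sub_ne_zero.mpr (Ne.symm hkl))
end
end

section
/- Let q₁ < 0 < q₂ and V(x) = x^{q₁} + x^{q₂} for x > 0. Assume B : (0,∞) → [0,∞) is continuous with B(x) → 0 as x → 0 and B(x) → +∞ as x → +∞. Then for every ω ∈ (0, −q₁) there exists a constant K > 0 such that for all x > 0, x V′(x) + B(x)(V(x/2) − V(x)) ≤ −ω (V(x) − K); equivalently, the continuous function x ↦ [q₁ + (2^{−q₁} − 1)B(x)] x^{q₁} + [q₂ + (2^{−q₂} − 1)B(x)] x^{q₂} + ω V(x) is bounded from above on (0,∞). -/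
open MeasureTheory Real Set Filter Topology

/-- Lyapunov inequality for `V(x) = x^{q₁} + x^{q₂}`, `q₁ < 0 < q₂`: if `B` is continuous,
nonnegative, vanishes at `0⁺` and tends to `+∞` at `+∞`, then for every `ω ∈ (0, -q₁)` there is
`K > 0` with `Ã V(x) = x V'(x) + B(x)(V(x/2) - V(x)) ≤ -ω (V(x) - K)` on `(0,∞)`; equivalently,
`[q₁ + (2^{-q₁}-1)B(x)]x^{q₁} + [q₂ + (2^{-q₂}-1)B(x)]x^{q₂} + ωV(x)` is bounded above. -/
theorem stmt19 (q₁ q₂ : ℝ) (hq₁ : q₁ < 0) (hq₂ : 0 < q₂)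
    (B : ℝ → ℝ) (hBc : ContinuousOn B (Ioi 0)) (hBnn : ∀ x > 0, 0 ≤ B x)
    (hB0 : Tendsto B (nhdsWithin 0 (Ioi 0)) (nhds 0))
    (hBinf : Tendsto B atTop atTop)
    (ω : ℝ) (hω : 0 < ω) (hω' : ω < -q₁) :
    (∃ K > (0:ℝ), ∀ x > 0,
      x * (q₁ * x ^ (q₁ - 1) + q₂ * x ^ (q₂ - 1))
          + B x * (((x / 2) ^ q₁ + (x / 2) ^ q₂) - (x ^ q₁ + x ^ q₂))
        ≤ -ω * ((x ^ q₁ + x ^ q₂) - K)) ∧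
    (∃ K', ∀ x > 0,
      (q₁ + ((2:ℝ) ^ (-q₁) - 1) * B x) * x ^ q₁
          + (q₂ + ((2:ℝ) ^ (-q₂) - 1) * B x) * x ^ q₂
          + ω * (x ^ q₁ + x ^ q₂) ≤ K') := by
  set f : ℝ → ℝ := fun x => (q₁ + ((2:ℝ) ^ (-q₁) - 1) * B x) * x ^ q₁
      + (q₂ + ((2:ℝ) ^ (-q₂) - 1) * B x) * x ^ q₂ + ω * (x ^ q₁ + x ^ q₂) with hfdef
  have h2q₁ : 1 < (2:ℝ) ^ (-q₁) := by
    rw [Real.one_lt_rpow_iff_of_pos two_pos]; left; exact ⟨one_lt_two, by linarith⟩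
  have h2q₂ : (2:ℝ) ^ (-q₂) < 1 :=
    Real.rpow_lt_one_of_one_lt_of_neg one_lt_two (by linarith)
  have hq₁ω : q₁ + ω < 0 := by linarith
  have hD : ((2:ℝ) ^ (-q₁) - 1) ≠ 0 := by linarith
  -- near zero
  set ε : ℝ := (-(q₁ + ω)) / (2 * ((2:ℝ) ^ (-q₁) - 1)) with hεdef
  have hεpos : 0 < ε := by apply div_pos <;> nlinarith
  have hεeq : ((2:ℝ) ^ (-q₁) - 1) * ε = -(q₁ + ω) / 2 := by
    rw [hεdef, mul_comm 2 ((2:ℝ) ^ (-q₁) - 1), ← mul_div_assoc,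
      mul_div_mul_left _ _ hD]
  have hev0 : ∀ᶠ x in 𝓝[>] (0:ℝ), B x < ε ∧ x ∈ Ioo (0:ℝ) 1 := by
    filter_upwards [hB0.eventually (eventually_lt_nhds hεpos),
      Ioo_mem_nhdsGT_of_mem (by constructor <;> norm_num : (0:ℝ) ∈ Ico (0:ℝ) 1)] with x h1 h2
    exact ⟨h1, h2⟩
  obtain ⟨δ, hδ0, hδ⟩ := mem_nhdsGT_iff_exists_Ioo_subset.mp hev0
  rw [mem_Ioi] at hδ0
  -- near infinity
  set c : ℝ := (1 - (2:ℝ) ^ (-q₂)) / 2 with hcdef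
  have hcpos : 0 < c := by rw [hcdef]; linarith
  have hevInf : ∀ᶠ x in atTop,
      ((q₂ + ω) / c ≤ B x ∧ ((2:ℝ) ^ (-q₁) - 1) / c ≤ x ^ q₂) ∧ 1 ≤ x := by
    filter_upwards [hBinf.eventually_ge_atTop ((q₂ + ω) / c),
      (tendsto_rpow_atTop hq₂).eventually_ge_atTop (((2:ℝ) ^ (-q₁) - 1) / c),
      eventually_ge_atTop (1:ℝ)] with x h1 h2 h3
    exact ⟨⟨h1, h2⟩, h3⟩
  obtain ⟨M, hM⟩ := eventually_atTop.mp hevInf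
  -- middle compact piece
  have hrp : ∀ q : ℝ, ContinuousOn (fun x : ℝ => x ^ q) (Ioi 0) := fun q =>
    ContinuousOn.rpow_const continuousOn_id (fun x hx => Or.inl (ne_of_gt hx))
  have hfc : ContinuousOn f (Ioi 0) := by
    refine ContinuousOn.add (ContinuousOn.add ?_ ?_) ?_
    · exact (ContinuousOn.add continuousOn_const (continuousOn_const.mul hBc)).mul (hrp q₁)
    · exact (ContinuousOn.add continuousOn_const (continuousOn_const.mul hBc)).mul (hrp q₂)
    · exact continuousOn_const.mul ((hrp q₁).add (hrp q₂))
  have hsub : Icc (δ/2) M ⊆ Ioi (0:ℝ) := fun x hx => lt_of_lt_of_le (by linarith) hx.1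
  obtain ⟨C₀, hC₀⟩ := (isCompact_Icc.image_of_continuousOn (hfc.mono hsub)).bddAbove
  rw [mem_upperBounds] at hC₀
  -- the key bound
  have hkey : ∀ x > 0, f x ≤ max C₀ (q₂ + ω) := by
    intro x hx
    have ha : 0 < x ^ q₁ := Real.rpow_pos_of_pos hx q₁
    have hb : 0 < x ^ q₂ := Real.rpow_pos_of_pos hx q₂
    have hBx : 0 ≤ B x := hBnn x hx
    rcases lt_or_ge x δ with h1 | h1
    · -- near zero
      obtain ⟨hBε, _, hx1⟩ := hδ ⟨hx, h1⟩
      have hb1 : x ^ q₂ ≤ 1 := Real.rpow_le_one hx.le hx1.le hq₂.le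
      have hC1 : q₁ + ω + ((2:ℝ) ^ (-q₁) - 1) * B x ≤ 0 := by
        have := mul_lt_mul_of_pos_left hBε (show (0:ℝ) < (2:ℝ) ^ (-q₁) - 1 by linarith)
        linarith
      have t1 : (q₁ + ((2:ℝ) ^ (-q₁) - 1) * B x) * x ^ q₁ + ω * x ^ q₁ ≤ 0 := by
        have := mul_nonpos_of_nonpos_of_nonneg hC1 ha.le
        nlinarith
      have w1 : ((2:ℝ) ^ (-q₂) - 1) * (B x * x ^ q₂) ≤ 0 :=
        mul_nonpos_of_nonpos_of_nonneg (by linarith) (mul_nonneg hBx hb.le)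
      have w2 : (q₂ + ω) * x ^ q₂ ≤ q₂ + ω := by
        have := mul_le_mul_of_nonneg_left hb1 (show (0:ℝ) ≤ q₂ + ω by linarith)
        linarith
      have t2 : (q₂ + ((2:ℝ) ^ (-q₂) - 1) * B x) * x ^ q₂ + ω * x ^ q₂ ≤ q₂ + ω := by
        nlinarith
      calc f x = ((q₁ + ((2:ℝ) ^ (-q₁) - 1) * B x) * x ^ q₁ + ω * x ^ q₁)
            + ((q₂ + ((2:ℝ) ^ (-q₂) - 1) * B x) * x ^ q₂ + ω * x ^ q₂) := by
            rw [hfdef]; ring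
        _ ≤ q₂ + ω := by linarith
        _ ≤ max C₀ (q₂ + ω) := le_max_right _ _
    rcases le_or_gt M x with h2 | h2
    · -- near infinity
      obtain ⟨⟨hBR, hbR⟩, hx1⟩ := hM x h2
      have ha1 : x ^ q₁ ≤ 1 := Real.rpow_le_one_of_one_le_of_nonpos hx1 hq₁.le
      have hbr : ((2:ℝ) ^ (-q₁) - 1) ≤ c * x ^ q₂ := by
        rw [div_le_iff₀ hcpos] at hbR; linarith [mul_comm c (x ^ q₂)]
      have hbracket : ((2:ℝ) ^ (-q₁) - 1) * x ^ q₁ + ((2:ℝ) ^ (-q₂) - 1) * x ^ q₂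
          ≤ -(c * x ^ q₂) := by
        have e2 : (2:ℝ) ^ (-q₂) - 1 = -(2 * c) := by rw [hcdef]; ring
        have := mul_le_mul_of_nonneg_left ha1 (show (0:ℝ) ≤ (2:ℝ) ^ (-q₁) - 1 by linarith)
        rw [e2]; linarith
      have hneg : -(c * x ^ q₂) ≤ 0 := neg_nonpos.mpr (mul_pos hcpos hb).le
      have step1 : B x * (((2:ℝ) ^ (-q₁) - 1) * x ^ q₁ + ((2:ℝ) ^ (-q₂) - 1) * x ^ q₂)
          ≤ ((q₂ + ω) / c) * (-(c * x ^ q₂)) := by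
        have f1 := mul_le_mul_of_nonneg_left hbracket hBx
        have f2 := mul_le_mul_of_nonpos_right hBR hneg
        linarith
      have step2 : ((q₂ + ω) / c) * (-(c * x ^ q₂)) = -((q₂ + ω) * x ^ q₂) := by
        have hRc : (q₂ + ω) / c * c = q₂ + ω := div_mul_cancel₀ _ hcpos.ne'
        linear_combination (-(x ^ q₂)) * hRc
      have hBbracket : B x * (((2:ℝ) ^ (-q₁) - 1) * x ^ q₁ + ((2:ℝ) ^ (-q₂) - 1) * x ^ q₂)
          ≤ -((q₂ + ω) * x ^ q₂) := by rw [← step2]; exact step1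
      calc f x = (q₁ + ω) * x ^ q₁ + (q₂ + ω) * x ^ q₂
            + B x * (((2:ℝ) ^ (-q₁) - 1) * x ^ q₁ + ((2:ℝ) ^ (-q₂) - 1) * x ^ q₂) := by
            rw [hfdef]; ring
        _ ≤ (q₁ + ω) * x ^ q₁ := by linarith
        _ ≤ 0 := mul_nonpos_of_nonpos_of_nonneg hq₁ω.le ha.le
        _ ≤ max C₀ (q₂ + ω) := le_trans (by linarith) (le_max_right _ _)
    · -- middle
      have : f x ≤ C₀ := hC₀ _ ⟨x, ⟨by linarith, h2.le⟩, rfl⟩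
      exact le_trans this (le_max_left _ _)
  set C : ℝ := max C₀ (q₂ + ω) with hCdef
  constructor
  · refine ⟨(|C| + 1) / ω, by positivity, ?_⟩
    intro x hx
    have hωK : ω * ((|C| + 1) / ω) = |C| + 1 := by field_simp
    have e1 : x * (q₁ * x ^ (q₁ - 1) + q₂ * x ^ (q₂ - 1)) = q₁ * x ^ q₁ + q₂ * x ^ q₂ := by
      have r1 : x * x ^ (q₁ - 1) = x ^ q₁ := by rw [Real.rpow_sub hx, Real.rpow_one]; field_simp
      have r2 : x * x ^ (q₂ - 1) = x ^ q₂ := by rw [Real.rpow_sub hx, Real.rpow_one]; field_simp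
      calc x * (q₁ * x ^ (q₁ - 1) + q₂ * x ^ (q₂ - 1))
          = q₁ * (x * x ^ (q₁ - 1)) + q₂ * (x * x ^ (q₂ - 1)) := by ring
        _ = q₁ * x ^ q₁ + q₂ * x ^ q₂ := by rw [r1, r2]
    have e2 : ∀ q : ℝ, (x / 2) ^ q = (2:ℝ) ^ (-q) * x ^ q := by
      intro q
      rw [Real.div_rpow hx.le (by norm_num), Real.rpow_neg (by norm_num)]; ring
    have hfx : f x ≤ C := hkey x hx
    have hCabs : C ≤ |C| := le_abs_self C
    rw [e1, e2 q₁, e2 q₂]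
    have expand : q₁ * x ^ q₁ + q₂ * x ^ q₂
        + B x * (((2:ℝ) ^ (-q₁) * x ^ q₁ + (2:ℝ) ^ (-q₂) * x ^ q₂) - (x ^ q₁ + x ^ q₂))
        = f x - ω * (x ^ q₁ + x ^ q₂) := by rw [hfdef]; ring
    rw [expand]
    linarith
  · exact ⟨C, hkey⟩
end
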